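/- arXiv:2411.17577 — 6 statements merged into one kernel-verified Lean document; each statement's English description precedes it below -/
import Mathlib

section
/- Let p be a prime and q ∈ (0,1). Then P_q(p) = q^p + (1−q)^p. -/
open Finset

/-- The binomial probability mass function. -/
noncomputable def phi (q : ℝ) (k n : ℕ) : ℝ :=
  (n.choose k : ℝ) * q ^ k * (1 - q) ^ (n - k)

/-- The Bernoulli(q) probability weight of an outcome `c : Fin n → Bool`. -/
noncomputable def bernWeight (q : ℝ) (n : ℕ) (c : Fin n → Bool) : ℝ :=
  q ^ (Finset.univ.filter (fun j => c j = true)).card *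
    (1 - q) ^ (n - (Finset.univ.filter (fun j => c j = true)).card)

/-- Singularity probability of an `n × n` circulant Bernoulli(q) matrix (0/1 entries). -/
noncomputable def Pq (q : ℝ) (n : ℕ) : ℝ :=
  ∑ c : Fin n → Bool,
    if (Matrix.of fun i j : Fin n => (if c (j - i) then (1 : ℚ) else 0)).det = 0 then
      bernWeight q n c
    else 0
lemma circ_det_eq_prod (n : ℕ) [NeZero n] (v : Fin n → ℚ) (ζ : ℂ)
    (hζ : IsPrimitiveRoot ζ n) :
    (((Matrix.of fun i j : Fin n => v (j - i)).det : ℚ) : ℂ) =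
      ∏ k : Fin n, ∑ j : Fin n, (v j : ℂ) * ζ ^ ((j : ℕ) * (k : ℕ)) := by
  have hpmod : ∀ a : ℕ, ζ ^ (a % n) = ζ ^ a := by
    intro a
    conv_rhs => rw [← Nat.div_add_mod a n]
    rw [pow_add, pow_mul, hζ.pow_eq_one, one_pow, one_mul]
  set M : Matrix (Fin n) (Fin n) ℂ := Matrix.of fun i j : Fin n => ((v (j - i) : ℚ) : ℂ) with hM
  have hmap : (((Matrix.of fun i j : Fin n => v (j - i)).det : ℚ) : ℂ) = M.det := by
    exact RingHom.map_det (Rat.castHom ℂ) (Matrix.of fun i j : Fin n => v (j - i))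
  set W : Matrix (Fin n) (Fin n) ℂ := Matrix.vandermonde (fun i : Fin n => ζ ^ (i : ℕ)) with hW
  have hWdet : W.det ≠ 0 := by
    rw [hW, Matrix.det_vandermonde]
    refine Finset.prod_ne_zero_iff.2 fun i _ => Finset.prod_ne_zero_iff.2 fun j hj => ?_
    have hij : i < j := Finset.mem_Ioi.1 hj
    refine sub_ne_zero.2 fun h => absurd (Fin.val_injective (hζ.pow_inj j.isLt i.isLt h)) ?_
    exact hij.ne'
  set d : Fin n → ℂ := fun k => ∑ j : Fin n, (v j : ℂ) * ζ ^ ((j : ℕ) * (k : ℕ)) with hd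
  have key : M * W = W * Matrix.diagonal d := by
    ext i k
    rw [Matrix.mul_apply, Matrix.mul_diagonal]
    calc ∑ j : Fin n, M i j * W j k
        = ∑ t : Fin n, M i (i + t) * W (i + t) k := by
          exact (Fintype.sum_equiv (Equiv.addLeft i) _ _ fun t => rfl).symm
      _ = ∑ t : Fin n, (v t : ℂ) * ζ ^ (((i : ℕ) + (t : ℕ)) * (k : ℕ)) := by
          refine Finset.sum_congr rfl fun t _ => ?_
          have h1 : (i + t : Fin n) - i = t := add_sub_cancel_left i t
          have h2 : W (i + t) k = ζ ^ (((i : ℕ) + (t : ℕ)) * (k : ℕ)) := by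
            show (ζ ^ ((i + t : Fin n) : ℕ)) ^ (k : ℕ) = _
            rw [Fin.val_add, hpmod, ← pow_mul]
          rw [h2, hM]
          simp only [Matrix.of_apply, h1]
      _ = W i k * d k := by
          rw [hd, hW, Finset.mul_sum]
          refine Finset.sum_congr rfl fun t _ => ?_
          rw [Matrix.vandermonde_apply, add_mul, pow_add, pow_mul]
          ring
  have h := congrArg Matrix.det key
  rw [Matrix.det_mul, Matrix.det_mul, Matrix.det_diagonal] at h
  rw [hmap]
  exact mul_right_cancel₀ hWdet (h.trans (mul_comm _ _))

lemma circ_det_zero_iff (p : ℕ) (hp : p.Prime) (c : Fin p → Bool) :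
    ((Matrix.of fun i j : Fin p => (if c (j - i) then (1 : ℚ) else 0)).det = 0 ↔
      ((∀ j, c j = false) ∨ (∀ j, c j = true))) := by
  haveI : Fact p.Prime := ⟨hp⟩
  haveI : NeZero p := ⟨hp.ne_zero⟩
  set v : Fin p → ℚ := fun j => if c j then (1 : ℚ) else 0 with hv
  have hζ : IsPrimitiveRoot (Complex.exp (2 * Real.pi * Complex.I / p)) p :=
    Complex.isPrimitiveRoot_exp p hp.ne_zero
  set ζ := Complex.exp (2 * Real.pi * Complex.I / p) with hζdef
  have hdet := circ_det_eq_prod p v ζ hζ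
  constructor
  · intro h
    by_contra hcon
    push_neg at hcon
    obtain ⟨⟨j1, hj1⟩, ⟨j0, hj0⟩⟩ := hcon
    rw [Bool.ne_false_iff] at hj1
    replace hj0 : c j0 = false := by simpa using hj0
    -- the polynomial f
    set f : Polynomial ℚ := ∑ j : Fin p, Polynomial.C (v j) * Polynomial.X ^ (j : ℕ) with hf
    have hcoeff : ∀ m : Fin p, f.coeff (m : ℕ) = v m := by
      intro m
      rw [hf, Polynomial.finset_sum_coeff]
      rw [Finset.sum_eq_single m]
      · simp
      · intro b _ hbm
        rw [Polynomial.coeff_C_mul, Polynomial.coeff_X_pow, if_neg, mul_zero]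
        exact fun hh => hbm (Fin.val_injective hh.symm)
      · simp
    have hfne : f ≠ 0 := by
      intro hh
      have := hcoeff j1
      rw [hh] at this
      simp [hv, hj1] at this
    have hfdeg : f.natDegree ≤ p - 1 := by
      refine Polynomial.natDegree_sum_le_of_forall_le _ _ fun j _ => ?_
      refine le_trans (Polynomial.natDegree_C_mul_le _ _) ?_
      rw [Polynomial.natDegree_X_pow]
      omega
    -- each factor is nonzero
    have hfac : ∀ k : Fin p, (∑ j : Fin p, (v j : ℂ) * ζ ^ ((j : ℕ) * (k : ℕ))) ≠ 0 := by
      intro k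
      rcases eq_or_ne (k : ℕ) 0 with hk | hk
      · rw [hk]
        simp only [Nat.mul_zero, pow_zero, mul_one]
        rw [← Rat.cast_sum, Rat.cast_ne_zero]
        have hpos : (0 : ℚ) < ∑ x : Fin p, v x := by
          refine Finset.sum_pos' (fun x _ => by rw [hv]; dsimp only; split <;> norm_num) ?_
          exact ⟨j1, Finset.mem_univ _, by simp [hv, hj1]⟩
        exact hpos.ne'
      · -- ζ^k is a primitive p-th root
        have hcop : Nat.Coprime (k : ℕ) p :=
          Nat.coprime_comm.1 (hp.coprime_iff_not_dvd.2 fun hdvd =>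
            hk (Nat.eq_zero_of_dvd_of_lt hdvd k.isLt))
        have hω : IsPrimitiveRoot (ζ ^ (k : ℕ)) p := hζ.pow_of_coprime _ hcop
        intro hS
        have haev : Polynomial.aeval (ζ ^ (k : ℕ)) f = 0 := by
          rw [hf, map_sum, ← hS]
          refine Finset.sum_congr rfl fun j _ => ?_
          rw [map_mul, Polynomial.aeval_C, map_pow, Polynomial.aeval_X, ← pow_mul,
            mul_comm (k : ℕ), eq_ratCast]
        have hmin : Polynomial.cyclotomic p ℚ = minpoly ℚ (ζ ^ (k : ℕ)) :=
          Polynomial.cyclotomic_eq_minpoly_rat hω hp.pos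
        have hdvd2 : Polynomial.cyclotomic p ℚ ∣ f := hmin ▸ minpoly.dvd ℚ _ haev
        obtain ⟨u, hu⟩ := hdvd2
        have hu0 : u ≠ 0 := fun hh => hfne (by rw [hu, hh, mul_zero])
        have hcyc_deg : (Polynomial.cyclotomic p ℚ).natDegree = p - 1 := by
          rw [Polynomial.natDegree_cyclotomic, Nat.totient_prime hp]
        have hudeg : u.natDegree = 0 := by
          have h2 := Polynomial.natDegree_mul (Polynomial.cyclotomic_ne_zero p ℚ) hu0
          rw [← hu, hcyc_deg] at h2
          omega
        obtain ⟨a, ha⟩ := Polynomial.natDegree_eq_zero.1 hudeg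
        have hcoe : ∀ m : Fin p, v m = a := by
          intro m
          have h1 := hcoeff m
          rw [hu, ← ha, Polynomial.coeff_mul_C] at h1
          have h2 : (Polynomial.cyclotomic p ℚ).coeff (m : ℕ) = 1 := by
            rw [Polynomial.cyclotomic_prime]
            rw [Polynomial.finset_sum_coeff]
            simp [Polynomial.coeff_X_pow, m.isLt]
          rw [h2, one_mul] at h1
          exact h1.symm
        have e1 := hcoe j1
        have e0 := hcoe j0
        rw [hv] at e1 e0
        simp only [hj1, hj0, if_true, if_false] at e1 e0
        rw [← e1] at e0
        norm_num at e0
    -- conclude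
    rw [show (Matrix.of fun i j : Fin p => if c (j - i) = true then (1:ℚ) else 0) =
        (Matrix.of fun i j : Fin p => v (j - i)) from rfl, h] at hdet
    have h0 : ∏ k : Fin p, ∑ j : Fin p, (v j : ℂ) * ζ ^ ((j : ℕ) * (k : ℕ)) = 0 := by
      exact_mod_cast hdet.symm
    exact (Finset.prod_ne_zero_iff.2 fun k _ => hfac k) h0
  · rintro (h | h)
    · apply Matrix.det_eq_zero_of_row_eq_zero 0
      intro j
      simp [v, h]
    · have h01 : (0 : Fin p) ≠ 1 := by
        have : 1 < p := hp.one_lt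
        simp [Fin.ext_iff, Fin.val_one, Nat.mod_eq_of_lt this]
      apply Matrix.det_zero_of_row_eq h01
      funext j
      simp [h]

/-- Lemma 3.2 (1): for p prime and q ∈ (0,1), P_q(p) = q^p + (1-q)^p. -/
theorem Pq_prime (p : ℕ) (hp : p.Prime) (q : ℝ) (hq0 : 0 < q) (hq1 : q < 1) :
    Pq q p = q ^ p + (1 - q) ^ p := by
  haveI : NeZero p := ⟨hp.ne_zero⟩
  unfold Pq
  have hsplit : ∀ c : Fin p → Bool,
      (if (Matrix.of fun i j : Fin p => (if c (j - i) then (1 : ℚ) else 0)).det = 0 then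
        bernWeight q p c else 0) =
      (if c = (fun _ => false) then bernWeight q p c else 0) +
        (if c = (fun _ => true) then bernWeight q p c else 0) := by
    intro c
    have hiff := circ_det_zero_iff p hp c
    by_cases h0 : c = fun _ => false
    · have h1 : c ≠ fun _ => true := by
        subst h0
        intro hh
        have := congrFun hh ⟨0, hp.pos⟩
        simp at this
      rw [if_pos h0, if_neg h1, if_pos (hiff.2 (Or.inl fun j => congrFun h0 j)), add_zero]
    · by_cases h1 : c = fun _ => true
      · rw [if_neg h0, if_pos h1, if_pos (hiff.2 (Or.inr fun j => congrFun h1 j)), zero_add]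
      · rw [if_neg h0, if_neg h1, if_neg, add_zero]
        rw [hiff]
        rintro (hh | hh)
        · exact h0 (funext hh)
        · exact h1 (funext hh)
  rw [Finset.sum_congr rfl fun c _ => hsplit c, Finset.sum_add_distrib,
    Finset.sum_ite_eq' Finset.univ, Finset.sum_ite_eq' Finset.univ,
    if_pos (Finset.mem_univ _), if_pos (Finset.mem_univ _)]
  have hcf : bernWeight q p (fun _ => false) = (1 - q) ^ p := by
    unfold bernWeight
    simp
  have hct : bernWeight q p (fun _ => true) = q ^ p := by
    unfold bernWeight
    simp [Finset.filter_true_of_mem]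
  rw [hcf, hct, add_comm]
end

section
/- Let p be a prime and q ∈ (0,1). Then P_q(p²) = (q^p + (1−q)^p)^p + ∑_{k=0}^{p} φ_q(k,p)^p − q^{p²} − (1−q)^{p²}. -/
open Finset

/-!
The eigenvalues of `circ(c)` are the values `f(ζ)`, `ζ ^ n = 1`, of `f = ∑ c_m X^m`, so for
`n = p²` the matrix is singular iff `f` vanishes at `1`, at a primitive `p`-th root or at a
primitive `p²`-th root of unity. As `deg f < p²` and the minimal polynomials over `ℚ` are
`Φ_p = ∑_{i<p} X^i` and `Φ_{p²} = ∑_{i<p} X^{p i}`, a 0/1 vector is singular iff either all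
residue classes mod `p` carry the same number of ones, or it is constant on every residue class
(`f(1) = 0` only for `c = 0`). The residue classes are independent blocks of `p` Bernoulli
coordinates, so these events have probabilities `∑_k φ_q(k,p)^p` and `(q^p + (1-q)^p)^p`; their
intersection consists of the two constant vectors, and inclusion–exclusion gives the formula.
-/

open Polynomial

noncomputable def circulantPoly {R : Type*} [Semiring R] {n : ℕ} (a : Fin n → R) : R[X] :=
  ∑ m, C (a m) * X ^ (m : ℕ)

section CirculantPoly

variable {R : Type*} [Semiring R] {n : ℕ}

theorem coeff_circulantPoly (a : Fin n → R) (m : Fin n) : (circulantPoly a).coeff m = a m := by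
  rw [circulantPoly, finsetSum_coeff, sum_eq_single m]
  · simp
  · intro k _ hk
    rw [coeff_C_mul_X_pow, if_neg (Fin.val_ne_of_ne hk.symm)]
  · simp

theorem degree_circulantPoly_lt (a : Fin n → R) : (circulantPoly a).degree < n := by
  refine (degree_sum_le _ _).trans_lt ((Finset.sup_lt_iff (WithBot.bot_lt_coe n)).2 fun m _ => ?_)
  exact (degree_C_mul_X_pow_le _ _).trans_lt (WithBot.coe_lt_coe.2 m.isLt)

theorem aeval_circulantPoly {R A : Type*} [CommSemiring R] [Semiring A] [Algebra R A]
    (a : Fin n → R) (z : A) :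
    aeval z (circulantPoly a) = ∑ m, algebraMap R A (a m) * z ^ (m : ℕ) := by
  simp [circulantPoly]

end CirculantPoly

theorem pow_val_fin_add {M : Type*} [Monoid M] {n : ℕ} {ζ : M} (hζ : ζ ^ n = 1) (i m : Fin n) :
    ζ ^ ((i + m : Fin n) : ℕ) = ζ ^ (i : ℕ) * ζ ^ (m : ℕ) := by
  rw [← pow_add, Fin.val_add]
  conv_rhs => rw [← Nat.mod_add_div (i + m : ℕ) n, pow_add, pow_mul, hζ, one_pow, mul_one]

theorem det_circulant_eq_prod {R : Type*} [CommRing R] [IsDomain R] {n : ℕ} [NeZero n] {ζ : R}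
    (hζ : IsPrimitiveRoot ζ n) (a : Fin n → R) :
    (Matrix.of fun i j : Fin n => a (j - i)).det =
      ∏ k : Fin n, ∑ m : Fin n, a m * (ζ ^ (k : ℕ)) ^ (m : ℕ) := by
  set V := Matrix.vandermonde fun k : Fin n => ζ ^ (k : ℕ)
  have hV : V.det ≠ 0 := Matrix.det_vandermonde_ne_zero_iff.2 fun k l h =>
    Fin.ext (hζ.pow_inj k.isLt l.isLt h)
  -- the columns of `V` are eigenvectors of every circulant matrix
  have hMV : Matrix.of (fun i j : Fin n => a (j - i)) * V =
      V * Matrix.diagonal fun k : Fin n => ∑ m : Fin n, a m * (ζ ^ (k : ℕ)) ^ (m : ℕ) := by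
    ext i k
    have hk : (ζ ^ (k : ℕ)) ^ n = 1 := by rw [pow_right_comm, hζ.pow_eq_one, one_pow]
    rw [Matrix.mul_apply, Matrix.mul_diagonal, ← Equiv.sum_comp (Equiv.addLeft i), mul_sum]
    refine sum_congr rfl fun m _ => ?_
    simp only [Matrix.of_apply, Equiv.coe_addLeft, add_sub_cancel_left, V,
      Matrix.vandermonde_apply]
    rw [pow_right_comm, pow_val_fin_add hk, pow_right_comm ζ (i : ℕ)]
    ring
  have := congrArg Matrix.det hMV
  rw [Matrix.det_mul, Matrix.det_mul, Matrix.det_diagonal, mul_comm] at this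
  exact mul_left_cancel₀ hV this

theorem det_circulant_eq_zero_iff {n : ℕ} [NeZero n] (a : Fin n → ℚ) :
    (Matrix.of fun i j : Fin n => a (j - i)).det = 0 ↔
      ∃ z : ℂ, z ^ n = 1 ∧ aeval z (circulantPoly a) = 0 := by
  obtain ⟨ζ, hζ⟩ : ∃ ζ : ℂ, IsPrimitiveRoot ζ n := ⟨_, Complex.isPrimitiveRoot_exp n (NeZero.ne n)⟩
  have hmap : ((Matrix.of fun i j : Fin n => a (j - i)).det : ℂ) =
      (Matrix.of fun i j : Fin n => (a (j - i) : ℂ)).det := by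
    rw [← eq_ratCast (algebraMap ℚ ℂ), RingHom.map_det]
    rfl
  rw [← (Rat.cast_injective (α := ℂ)).eq_iff, Rat.cast_zero, hmap,
    det_circulant_eq_prod hζ (fun m => (a m : ℂ)), prod_eq_zero_iff]
  simp only [aeval_circulantPoly, eq_ratCast, mem_univ, true_and]
  constructor
  · rintro ⟨k, hk⟩
    exact ⟨ζ ^ (k : ℕ), by rw [pow_right_comm, hζ.pow_eq_one, one_pow], hk⟩
  · rintro ⟨z, hz, h⟩
    obtain ⟨k, hk, rfl⟩ := hζ.eq_pow_of_pow_eq_one hz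
    exact ⟨⟨k, hk⟩, h⟩

theorem coeff_geom_sum_X_pow_mul {R : Type*} [Semiring R] {d k : ℕ} {u : R[X]}
    (hu : u.degree < d) (m : ℕ) :
    ((∑ i ∈ range k, (X ^ d) ^ i) * u).coeff m = if m / d < k then u.coeff (m % d) else 0 := by
  rcases eq_or_ne u 0 with rfl | hu0
  · simp
  have hud : u.natDegree < d := (natDegree_lt_iff_degree_lt hu0).2 hu
  have hterm (i : ℕ) : ((X ^ d) ^ i * u).coeff m = if i = m / d then u.coeff (m % d) else 0 := by
    rw [← pow_mul, coeff_X_pow_mul']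
    split_ifs with hle hi hi
    · rw [hi, Nat.mod_eq_sub_mul_div]
    · have hd : 0 < d := by omega
      have hlt : i < m / d :=
        lt_of_le_of_ne ((Nat.le_div_iff_mul_le hd).2 (by rwa [mul_comm])) hi
      have : (i + 1) * d ≤ m := (Nat.le_div_iff_mul_le hd).1 hlt
      exact coeff_eq_zero_of_natDegree_lt (by rw [Nat.succ_mul, mul_comm] at this; omega)
    · exact absurd (hi ▸ Nat.mul_div_le m d) hle
    · rfl
  rw [sum_mul, finsetSum_coeff, sum_congr rfl fun i _ => hterm i, sum_ite_eq' (range k)]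
  simp only [mem_range]

theorem cyclotomic_prime_pow_dvd_iff {R : Type*} [CommRing R] [Nontrivial R] {p j : ℕ}
    (hp : p.Prime) {f : R[X]} (hf : f.degree < ↑(p ^ (j + 1))) :
    cyclotomic (p ^ (j + 1)) R ∣ f ↔ ∀ m < p ^ (j + 1), f.coeff m = f.coeff (m % p ^ j) := by
  have hpj : 0 < p ^ j := pow_pos hp.pos j
  have hdiv (m : ℕ) : m / p ^ j < p ↔ m < p ^ (j + 1) := by
    rw [Nat.div_lt_iff_lt_mul hpj, pow_succ, mul_comm]
  -- `Φ_{p^(j+1)} = ∑_{i<p} X^(p^j i)` lays `p` copies of `u` side by side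
  have hcoeff {u : R[X]} (hu : u.degree < ↑(p ^ j)) (m : ℕ) :
      (cyclotomic (p ^ (j + 1)) R * u).coeff m =
        if m < p ^ (j + 1) then u.coeff (m % p ^ j) else 0 := by
    rw [cyclotomic_prime_pow_eq_geom_sum hp, coeff_geom_sum_X_pow_mul hu, if_congr (hdiv m) rfl rfl]
  constructor
  · rintro ⟨u, rfl⟩ m hm
    rcases eq_or_ne u 0 with rfl | hu0
    · simp
    have hmon := cyclotomic.monic (p ^ (j + 1)) R
    have hdeg : (cyclotomic (p ^ (j + 1)) R).natDegree + u.natDegree < p ^ (j + 1) := by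
      rw [← hmon.natDegree_mul' hu0]
      exact (natDegree_lt_iff_degree_lt (hmon.mul_right_ne_zero hu0)).2 hf
    have hcyc : (cyclotomic (p ^ (j + 1)) R).natDegree + p ^ j = p ^ (j + 1) := by
      rw [natDegree_cyclotomic, Nat.totient_prime_pow_succ hp, ← Nat.mul_succ,
        Nat.succ_eq_add_one, Nat.sub_add_cancel hp.one_lt.le, pow_succ]
    have hu : u.degree < ↑(p ^ j) := (natDegree_lt_iff_degree_lt hu0).1 (by omega)
    have hmod : m % p ^ j < p ^ (j + 1) :=
      (Nat.mod_lt m hpj).trans_le (Nat.pow_le_pow_right hp.pos j.le_succ)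
    rw [hcoeff hu, hcoeff hu, if_pos hm, if_pos hmod, Nat.mod_mod]
  · intro hper
    refine ⟨circulantPoly fun v : Fin (p ^ j) => f.coeff v, ext fun m => ?_⟩
    rw [hcoeff (degree_circulantPoly_lt _)]
    split_ifs with hm
    · exact (hper m hm).trans
        (coeff_circulantPoly (fun v : Fin (p ^ j) => f.coeff v) ⟨m % p ^ j, Nat.mod_lt m hpj⟩).symm
    · exact coeff_eq_zero_of_degree_lt (hf.trans_le (by exact_mod_cast not_lt.1 hm))

theorem aeval_eq_zero_iff_coeff_periodic {K : Type*} [Field K] [CharZero K] {p j : ℕ}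
    (hp : p.Prime) {μ : K} (hμ : IsPrimitiveRoot μ (p ^ (j + 1))) {f : ℚ[X]}
    (hf : f.degree < ↑(p ^ (j + 1))) :
    aeval μ f = 0 ↔ ∀ m < p ^ (j + 1), f.coeff m = f.coeff (m % p ^ j) := by
  rw [← minpoly.dvd_iff, ← cyclotomic_eq_minpoly_rat hμ (pow_pos hp.pos _),
    cyclotomic_prime_pow_dvd_iff hp hf]

def digitEquiv (p : ℕ) : Fin p × Fin p ≃ Fin (p ^ 2) :=
  (Equiv.prodComm _ _).trans (finProdFinEquiv.trans (finCongr (sq p).symm))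

theorem val_digitEquiv {p : ℕ} (x : Fin p × Fin p) :
    (digitEquiv p x : ℕ) = x.1 + p * x.2 := rfl

theorem val_digitEquiv_mod {p : ℕ} (x : Fin p × Fin p) : (digitEquiv p x : ℕ) % p = x.1 := by
  rw [val_digitEquiv, Nat.add_mul_mod_self_left, Nat.mod_eq_of_lt x.1.isLt]

section PrimeSquare

variable {p : ℕ}

theorem eq_one_or_isPrimitiveRoot_of_pow_prime_sq {M : Type*} [CommMonoid M] (hp : p.Prime)
    {z : M} (hz : z ^ (p ^ 2) = 1) :
    z = 1 ∨ IsPrimitiveRoot z p ∨ IsPrimitiveRoot z (p ^ 2) := by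
  obtain ⟨i, hi, hord⟩ := (Nat.dvd_prime_pow hp).1 (orderOf_dvd_of_pow_eq_one hz)
  have hz' : IsPrimitiveRoot z (p ^ i) := hord ▸ IsPrimitiveRoot.orderOf z
  interval_cases i
  · exact Or.inl (IsPrimitiveRoot.one_right_iff.1 (by simpa using hz'))
  · exact Or.inr (Or.inl (by simpa using hz'))
  · exact Or.inr (Or.inr hz')

theorem aeval_circulantPoly_of_pow_eq_one {A : Type*} [CommSemiring A] [Algebra ℚ A] {z : A}
    (hz : z ^ p = 1) (a : Fin (p ^ 2) → ℚ) :
    aeval z (circulantPoly a) =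
      aeval z (circulantPoly fun v : Fin p => ∑ t, a (digitEquiv p (v, t))) := by
  rw [aeval_circulantPoly, aeval_circulantPoly, ← Equiv.sum_comp (digitEquiv p),
    Fintype.sum_prod_type]
  refine sum_congr rfl fun v _ => ?_
  rw [map_sum, sum_mul]
  refine sum_congr rfl fun t _ => ?_
  rw [val_digitEquiv, pow_add, pow_mul, hz, one_pow, mul_one]

theorem aeval_circulantPoly_eq_zero_iff_of_prime {K : Type*} [Field K] [CharZero K]
    (hp : p.Prime) {z : K} (hz : IsPrimitiveRoot z p) (a : Fin (p ^ 2) → ℚ) :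
    aeval z (circulantPoly a) = 0 ↔
      ∀ v w : Fin p, ∑ t, a (digitEquiv p (v, t)) = ∑ t, a (digitEquiv p (w, t)) := by
  have h0 : 0 < p := hp.pos
  rw [aeval_circulantPoly_of_pow_eq_one hz.pow_eq_one,
    aeval_eq_zero_iff_coeff_periodic (j := 0) hp (by rwa [zero_add, pow_one])
      (by simpa using degree_circulantPoly_lt _)]
  simp only [zero_add, pow_one, pow_zero, Nat.mod_one]
  set g : Fin p → ℚ := fun v => ∑ t, a (digitEquiv p (v, t))
  have hc0 : (circulantPoly g).coeff 0 = g ⟨0, h0⟩ := coeff_circulantPoly g ⟨0, h0⟩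
  constructor
  · intro h v w
    exact (coeff_circulantPoly g v).symm.trans
      ((h v v.isLt).trans ((h w w.isLt).symm.trans (coeff_circulantPoly g w)))
  · intro h m hm
    exact hc0 ▸ (coeff_circulantPoly g ⟨m, hm⟩).trans (h _ _)

theorem aeval_circulantPoly_eq_zero_iff_of_prime_sq {K : Type*} [Field K] [CharZero K]
    (hp : p.Prime) {z : K} (hz : IsPrimitiveRoot z (p ^ 2)) (a : Fin (p ^ 2) → ℚ) :
    aeval z (circulantPoly a) = 0 ↔
      ∀ v t t' : Fin p, a (digitEquiv p (v, t)) = a (digitEquiv p (v, t')) := by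
  have h0 : 0 < p := hp.pos
  rw [aeval_eq_zero_iff_coeff_periodic (j := 1) hp hz (degree_circulantPoly_lt a), pow_one]
  have hc (x : Fin p × Fin p) : (circulantPoly a).coeff (digitEquiv p x) = a (digitEquiv p x) :=
    coeff_circulantPoly a _
  have hmod (x : Fin p × Fin p) :
      (circulantPoly a).coeff ((digitEquiv p x : ℕ) % p) = a (digitEquiv p (x.1, ⟨0, h0⟩)) := by
    rw [val_digitEquiv_mod]
    exact coeff_circulantPoly a (digitEquiv p (x.1, ⟨0, h0⟩))
  constructor
  · intro h v t t'
    have ht := h _ (digitEquiv p (v, t)).isLt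
    have ht' := h _ (digitEquiv p (v, t')).isLt
    rw [hc, hmod] at ht ht'
    rw [ht, ht']
  · intro h m hm
    obtain ⟨x, hx⟩ := (digitEquiv p).surjective ⟨m, hm⟩
    rw [show m = digitEquiv p x by rw [hx], hc, hmod]
    exact h _ _ _

theorem det_circulant_prime_sq_eq_zero_iff (hp : p.Prime) (a : Fin (p ^ 2) → ℚ) :
    (Matrix.of fun i j : Fin (p ^ 2) => a (j - i)).det = 0 ↔
      ∑ m, a m = 0 ∨
      (∀ v w : Fin p, ∑ t, a (digitEquiv p (v, t)) = ∑ t, a (digitEquiv p (w, t))) ∨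
      ∀ v t t' : Fin p, a (digitEquiv p (v, t)) = a (digitEquiv p (v, t')) := by
  have : NeZero (p ^ 2) := ⟨(pow_pos hp.pos 2).ne'⟩
  obtain ⟨ζ, hζ⟩ : ∃ ζ : ℂ, IsPrimitiveRoot ζ p := ⟨_, Complex.isPrimitiveRoot_exp p hp.ne_zero⟩
  obtain ⟨ξ, hξ⟩ : ∃ ξ : ℂ, IsPrimitiveRoot ξ (p ^ 2) :=
    ⟨_, Complex.isPrimitiveRoot_exp _ (NeZero.ne _)⟩
  have h1 : aeval (1 : ℂ) (circulantPoly a) = 0 ↔ ∑ m, a m = 0 := by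
    simp only [aeval_circulantPoly, one_pow, mul_one, eq_ratCast]
    exact_mod_cast Iff.rfl
  rw [det_circulant_eq_zero_iff]
  constructor
  · rintro ⟨z, hz, hfz⟩
    rcases eq_one_or_isPrimitiveRoot_of_pow_prime_sq hp hz with rfl | hz | hz
    · exact Or.inl (h1.1 hfz)
    · exact Or.inr (Or.inl ((aeval_circulantPoly_eq_zero_iff_of_prime hp hz a).1 hfz))
    · exact Or.inr (Or.inr ((aeval_circulantPoly_eq_zero_iff_of_prime_sq hp hz a).1 hfz))
  · rintro (h | h | h)
    · exact ⟨1, one_pow _, h1.2 h⟩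
    · exact ⟨ζ, by rw [sq, pow_mul, hζ.pow_eq_one, one_pow],
        (aeval_circulantPoly_eq_zero_iff_of_prime hp hζ a).2 h⟩
    · exact ⟨ξ, hξ.pow_eq_one, (aeval_circulantPoly_eq_zero_iff_of_prime_sq hp hξ a).2 h⟩

end PrimeSquare

def EqualRowCounts {ι κ : Type*} [Fintype κ] (d : ι → κ → Bool) : Prop :=
  ∀ v w, #{t | d v t} = #{t | d w t}

def ConstantRows {ι κ : Type*} (d : ι → κ → Bool) : Prop :=
  ∀ v t t', d v t = d v t'

instance {ι κ : Type*} [Fintype ι] [Fintype κ] : DecidablePred (EqualRowCounts (ι := ι) (κ := κ)) :=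
  fun d => inferInstanceAs (Decidable (∀ v w, #{t | d v t} = #{t | d w t}))

instance {ι κ : Type*} [Fintype ι] [Fintype κ] : DecidablePred (ConstantRows (ι := ι) (κ := κ)) :=
  fun d => inferInstanceAs (Decidable (∀ v t t', d v t = d v t'))

-- row `v` of `digitBlocks p c` is `c` restricted to the residue class of `v` mod `p`
def digitBlocks (p : ℕ) {α : Type*} : (Fin (p ^ 2) → α) ≃ (Fin p → Fin p → α) :=
  ((digitEquiv p).arrowCongr (Equiv.refl α)).symm.trans (Equiv.curry _ _ _)

theorem digitBlocks_apply {p : ℕ} {α : Type*} (c : Fin (p ^ 2) → α) (v t : Fin p) :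
    digitBlocks p c v t = c (digitEquiv p (v, t)) := rfl

theorem det_circulant_bool_eq_zero_iff {p : ℕ} (hp : p.Prime) (c : Fin (p ^ 2) → Bool) :
    (Matrix.of fun i j : Fin (p ^ 2) => if c (j - i) then (1 : ℚ) else 0).det = 0 ↔
      EqualRowCounts (digitBlocks p c) ∨ ConstantRows (digitBlocks p c) := by
  have hboole (b b' : Bool) : ((if b then 1 else 0 : ℚ) = if b' then 1 else 0) ↔ b = b' := by
    cases b <;> cases b' <;> simp
  rw [det_circulant_prime_sq_eq_zero_iff hp fun m => if c m then 1 else 0]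
  simp only [sum_boole, Nat.cast_inj, hboole, Nat.cast_eq_zero, card_eq_zero,
    filter_eq_empty_iff]
  refine ⟨?_, Or.inr⟩
  rintro (h | h)
  · exact Or.inr fun v t t' => by simp [digitBlocks_apply, h]
  · exact h

theorem Finset.sum_ite_or {α R : Type*} [AddCommGroup R] (s : Finset α) (P Q : α → Prop)
    [DecidablePred P] [DecidablePred Q] (f : α → R) :
    ∑ x ∈ s, (if P x ∨ Q x then f x else 0) =
      ∑ x ∈ s, (if P x then f x else 0) + ∑ x ∈ s, (if Q x then f x else 0) -
        ∑ x ∈ s, (if P x ∧ Q x then f x else 0) := by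
  rw [← sum_add_distrib, ← sum_sub_distrib]
  refine sum_congr rfl fun x _ => ?_
  by_cases hP : P x <;> by_cases hQ : Q x <;> simp [hP, hQ]

theorem sum_ite_forall_prod_eq_pow {ι β R : Type*} [Fintype ι] [DecidableEq ι] [Fintype β]
    [CommSemiring R] (P : β → Prop) [DecidablePred P] (g : β → R) :
    ∑ d : ι → β, (if ∀ i, P (d i) then ∏ i, g (d i) else 0) =
      (∑ b, if P b then g b else 0) ^ Fintype.card ι := by
  rw [← card_univ, ← prod_const, Fintype.prod_sum]
  exact sum_congr rfl fun d _ => Fintype.prod_ite_zero.symm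

theorem sum_ite_const_prod {α R : Type*} [Fintype α] [DecidableEq α] [Nonempty α] [CommRing R]
    (q : R) :
    ∑ b : α → Bool, (if ∀ x y, b x = b y then ∏ x, (if b x then q else 1 - q) else 0) =
      q ^ Fintype.card α + (1 - q) ^ Fintype.card α := by
  have hne : (fun _ : α => true) ≠ fun _ => false := fun h =>
    Bool.noConfusion (congrFun h (Classical.arbitrary α))
  have hconst : ({b | ∀ x y, b x = b y} : Finset (α → Bool)) = {fun _ => true, fun _ => false} := by
    ext b
    simp only [mem_filter, mem_univ, true_and, mem_insert, mem_singleton, funext_iff]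
    constructor
    · intro h
      cases hb : b (Classical.arbitrary α)
      · exact Or.inr fun x => (h x _).trans hb
      · exact Or.inl fun x => (h x _).trans hb
    · rintro (h | h) x y <;> rw [h x, h y]
  rw [← sum_filter, hconst, sum_pair hne]
  simp

theorem prod_ite_eq_pow_mul_pow {κ R : Type*} [Fintype κ] [CommRing R] (q : R) (b : κ → Bool) :
    ∏ i, (if b i then q else 1 - q) = q ^ #{i | b i} * (1 - q) ^ (Fintype.card κ - #{i | b i}) := by
  have hcard := card_filter_add_card_filter_not (s := univ) fun i => b i = true
  rw [prod_ite, prod_const, prod_const, ← card_univ, ← hcard, Nat.add_sub_cancel_left]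

theorem bernWeight_eq_prod (q : ℝ) {n : ℕ} (c : Fin n → Bool) :
    bernWeight q n c = ∏ i, if c i then q else 1 - q := by
  rw [prod_ite_eq_pow_mul_pow, Fintype.card_fin, bernWeight]

theorem sum_ite_card_eq_phi {κ : Type*} [Fintype κ] [DecidableEq κ] (q : ℝ) (k : ℕ) :
    ∑ b : κ → Bool, (if #{i | b i} = k then ∏ i, (if b i then q else 1 - q) else 0) =
      phi q k (Fintype.card κ) := by
  have hcount : #{b : κ → Bool | #{i | b i} = k} = (Fintype.card κ).choose k := by
    rw [show (Fintype.card κ).choose k = #(powersetCard k (univ : Finset κ)) by simp]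
    exact card_nbij' (fun b => ({i | b i} : Finset κ)) (fun s i => decide (i ∈ s))
      (fun b hb => by simpa using hb) (fun s hs => by simpa using hs)
      (fun b _ => by ext; simp) (fun s _ => by ext; simp)
  calc ∑ b : κ → Bool, (if #{i | b i} = k then ∏ i, (if b i then q else 1 - q) else 0)
      = ∑ b : κ → Bool, (if #{i | b i} = k then q ^ k * (1 - q) ^ (Fintype.card κ - k) else 0) :=
        sum_congr rfl fun b _ => by split_ifs with h <;> simp only [prod_ite_eq_pow_mul_pow, h]
    _ = phi q k (Fintype.card κ) := by
      rw [← sum_filter, sum_const, hcount, nsmul_eq_mul, phi, mul_assoc]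

theorem ite_equalRowCounts_eq_sum {ι κ R : Type*} [Fintype ι] [Fintype κ] [Nonempty ι]
    [AddCommMonoid R] (d : ι → κ → Bool) (x : R) :
    (if EqualRowCounts d then x else 0) =
      ∑ k ∈ range (Fintype.card κ + 1), if ∀ v, #{t | d v t} = k then x else 0 := by
  obtain ⟨v₀⟩ := ‹Nonempty ι›
  by_cases h : EqualRowCounts d
  · have hmem : #{t | d v₀ t} ∈ range (Fintype.card κ + 1) :=
      mem_range.2 (Nat.lt_succ_of_le (card_le_univ _))
    rw [if_pos h, sum_eq_single_of_mem _ hmem, if_pos fun v => h v v₀]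
    exact fun k _ hk => if_neg fun h' => hk (h' v₀).symm
  · rw [if_neg h]
    exact (sum_eq_zero fun k _ => if_neg fun h' => h fun v w => (h' v).trans (h' w).symm).symm

theorem equalRowCounts_and_constantRows_iff {ι κ : Type*} [Fintype κ] [Nonempty κ]
    (d : ι → κ → Bool) : EqualRowCounts d ∧ ConstantRows d ↔ ∀ v t w s, d v t = d w s := by
  constructor
  · rintro ⟨hcount, hrow⟩ v t w s
    rw [hrow v t s]
    have hcard (u : ι) : #{t | d u t} = if d u s then Fintype.card κ else 0 := by
      split_ifs with hu
      · rw [filter_true_of_mem fun t _ => (hrow u t s).trans hu, card_univ]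
      · rw [filter_false_of_mem fun t _ => by rw [hrow u t s]; exact hu, card_empty]
    have hvw := hcount v w
    rw [hcard, hcard] at hvw
    revert hvw
    cases d v s <;> cases d w s <;> simp [Fintype.card_ne_zero, eq_comm]
  · intro h
    exact ⟨fun v w => congrArg card (filter_congr fun t _ => by rw [h v t w t]),
      fun v t t' => h v t v t'⟩

theorem sum_constantRows_prod {ι κ R : Type*} [Fintype ι] [DecidableEq ι] [Fintype κ]
    [DecidableEq κ] [Nonempty κ] [CommRing R] (q : R) :
    ∑ d : ι → κ → Bool, (if ConstantRows d then ∏ v, ∏ t, (if d v t then q else 1 - q) else 0) =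
      (q ^ Fintype.card κ + (1 - q) ^ Fintype.card κ) ^ Fintype.card ι := by
  rw [← sum_ite_const_prod]
  exact sum_ite_forall_prod_eq_pow (fun b : κ → Bool => ∀ t t', b t = b t')
    fun b => ∏ t, if b t then q else 1 - q

theorem sum_equalRowCounts_prod {ι κ : Type*} [Fintype ι] [DecidableEq ι] [Nonempty ι]
    [Fintype κ] [DecidableEq κ] (q : ℝ) :
    ∑ d : ι → κ → Bool, (if EqualRowCounts d then ∏ v, ∏ t, (if d v t then q else 1 - q) else 0) =
      ∑ k ∈ range (Fintype.card κ + 1), phi q k (Fintype.card κ) ^ Fintype.card ι := by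
  simp_rw [ite_equalRowCounts_eq_sum]
  rw [sum_comm]
  refine sum_congr rfl fun k _ => ?_
  rw [← sum_ite_card_eq_phi]
  exact sum_ite_forall_prod_eq_pow (fun b : κ → Bool => #{t | b t} = k)
    fun b => ∏ t, if b t then q else 1 - q

section DigitBlocks

variable {p : ℕ}

theorem bernWeight_eq_prod_digitBlocks (q : ℝ) (c : Fin (p ^ 2) → Bool) :
    bernWeight q (p ^ 2) c = ∏ v, ∏ t, if digitBlocks p c v t then q else 1 - q := by
  rw [bernWeight_eq_prod, ← Equiv.prod_comp (digitEquiv p), Fintype.prod_prod_type]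
  rfl

theorem sum_constantRows_bernWeight (q : ℝ) (hp : 0 < p) :
    ∑ c : Fin (p ^ 2) → Bool,
        (if ConstantRows (digitBlocks p c) then bernWeight q (p ^ 2) c else 0) =
      (q ^ p + (1 - q) ^ p) ^ p := by
  have : Nonempty (Fin p) := ⟨⟨0, hp⟩⟩
  simp_rw [bernWeight_eq_prod_digitBlocks]
  rw [Equiv.sum_comp (digitBlocks p)
      (fun d => if ConstantRows d then ∏ v, ∏ t, (if d v t then q else 1 - q) else 0),
    sum_constantRows_prod, Fintype.card_fin]

theorem sum_equalRowCounts_bernWeight (q : ℝ) (hp : 0 < p) :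
    ∑ c : Fin (p ^ 2) → Bool,
        (if EqualRowCounts (digitBlocks p c) then bernWeight q (p ^ 2) c else 0) =
      ∑ k ∈ range (p + 1), phi q k p ^ p := by
  have : Nonempty (Fin p) := ⟨⟨0, hp⟩⟩
  simp_rw [bernWeight_eq_prod_digitBlocks]
  rw [Equiv.sum_comp (digitBlocks p)
      (fun d => if EqualRowCounts d then ∏ v, ∏ t, (if d v t then q else 1 - q) else 0),
    sum_equalRowCounts_prod, Fintype.card_fin]

theorem sum_equalRowCounts_and_constantRows_bernWeight (q : ℝ) (hp : 0 < p) :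
    ∑ c : Fin (p ^ 2) → Bool,
        (if EqualRowCounts (digitBlocks p c) ∧ ConstantRows (digitBlocks p c)
          then bernWeight q (p ^ 2) c else 0) =
      q ^ (p ^ 2) + (1 - q) ^ (p ^ 2) := by
  have : Nonempty (Fin p) := ⟨⟨0, hp⟩⟩
  have : Nonempty (Fin (p ^ 2)) := ⟨⟨0, pow_pos hp 2⟩⟩
  have hconst (c : Fin (p ^ 2) → Bool) :
      EqualRowCounts (digitBlocks p c) ∧ ConstantRows (digitBlocks p c) ↔ ∀ m m', c m = c m' := by
    simp only [equalRowCounts_and_constantRows_iff, digitBlocks_apply,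
      ← (digitEquiv p).forall_congr_right, Prod.forall]
  have h := sum_ite_const_prod (α := Fin (p ^ 2)) q
  rw [Fintype.card_fin] at h
  rw [← h]
  -- `convert` bridges two different `Decidable` instances of `∀ m m', c m = c m'`
  exact sum_congr rfl fun c _ => by convert if_congr (hconst c) (bernWeight_eq_prod q c) rfl

end DigitBlocks

theorem Pq_prime_sq_general (p : ℕ) (hp : p.Prime) (q : ℝ) :
    Pq q (p ^ 2) =
      (q ^ p + (1 - q) ^ p) ^ p + (∑ k ∈ Finset.range (p + 1), phi q k p ^ p)
        - q ^ (p ^ 2) - (1 - q) ^ (p ^ 2) := by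
  have hp0 := hp.pos
  calc Pq q (p ^ 2)
      = ∑ c : Fin (p ^ 2) → Bool,
          if EqualRowCounts (digitBlocks p c) ∨ ConstantRows (digitBlocks p c)
            then bernWeight q (p ^ 2) c else 0 :=
        sum_congr rfl fun c _ => if_congr (det_circulant_bool_eq_zero_iff hp c) rfl rfl
    _ = _ := by
      rw [sum_ite_or, sum_equalRowCounts_bernWeight q hp0, sum_constantRows_bernWeight q hp0,
        sum_equalRowCounts_and_constantRows_bernWeight q hp0]
      ring

/-- Lemma 3.2 (2): for p prime and q ∈ (0,1),
P_q(p²) = (q^p + (1-q)^p)^p + ∑_{k=0}^p φ_q(k,p)^p − q^{p²} − (1-q)^{p²}. -/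
theorem Pq_prime_sq (p : ℕ) (hp : p.Prime) (q : ℝ) (hq0 : 0 < q) (hq1 : q < 1) :
    Pq q (p ^ 2) =
      (q ^ p + (1 - q) ^ p) ^ p + (∑ k ∈ Finset.range (p + 1), phi q k p ^ p)
        - q ^ (p ^ 2) - (1 - q) ^ (p ^ 2) :=
  Pq_prime_sq_general p hp q
end

section
/- Let q ∈ (0,1), let n be a positive integer, and let p be a prime dividing n. Then P_q(p,n) = ∑_{k=0}^{n/p} φ_q(k, n/p)^p. -/
open Finset

/-- Probability that the random 0/1 polynomial ∑_j c_j x^j of degree < n (with i.i.d.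
Bernoulli(q) coefficients) vanishes at the primitive d-th root of unity exp(2πi/d),
i.e. that it is divisible by the d-th cyclotomic polynomial. -/
noncomputable def Pqd (q : ℝ) (d n : ℕ) : ℝ :=
  ∑ c : Fin n → Bool,
    if (∑ j : Fin n,
          (if c j then (1 : ℂ) else 0) *
            Complex.exp (2 * Real.pi * Complex.I / d) ^ (j : ℕ)) = 0 then
      bernWeight q n c
    else 0

section Aux
open Polynomial
lemma keyA {p : ℕ} (hp : p.Prime) (a : Fin p → ℕ) :
    (∑ r : Fin p, (a r : ℂ) * Complex.exp (2 * Real.pi * Complex.I / p) ^ (r : ℕ)) = 0 ↔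
      ∀ r, a r = a ⟨0, hp.pos⟩ := by
  haveI := Fact.mk hp
  set ζ : ℂ := Complex.exp (2 * Real.pi * Complex.I / p) with hζdef
  have hprim : IsPrimitiveRoot ζ p := Complex.isPrimitiveRoot_exp p hp.ne_zero
  have hgeom : ∑ r : Fin p, ζ ^ (r : ℕ) = 0 := by
    rw [Fin.sum_univ_eq_sum_range]
    exact hprim.geom_sum_eq_zero hp.one_lt
  constructor
  · intro hsum
    set a0 : ℕ := a ⟨0, hp.pos⟩ with ha0
    set b : ℕ → ℚ := fun i => if h : i < p then ((a ⟨i, h⟩ : ℚ) - a0) else 0 with hb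
    set f : ℚ[X] := ∑ i ∈ range p, C (b i) * X ^ i with hf
    have hcoeff : ∀ j, f.coeff j = if j < p then b j else 0 := by
      intro j
      simp only [hf, finset_sum_coeff, coeff_C_mul, coeff_X_pow, mul_ite, mul_one, mul_zero]
      rw [Finset.sum_ite_eq (range p) j b]
      simp [Finset.mem_range]
    have hbfin : ∀ r : Fin p, (b (r : ℕ) : ℂ) = (a r : ℂ) - a0 := by
      intro r
      have : b (r : ℕ) = (a r : ℚ) - a0 := by
        rw [hb]; simp only [r.isLt, dif_pos, Fin.eta]
      rw [this]; push_cast; ring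
    have haev : aeval ζ f = 0 := by
      rw [hf]
      simp only [map_sum, map_mul, aeval_C, aeval_X_pow]
      rw [← Fin.sum_univ_eq_sum_range (fun i => (algebraMap ℚ ℂ) (b i) * ζ ^ i) p]
      have : ∀ r : Fin p, (algebraMap ℚ ℂ) (b (r : ℕ)) * ζ ^ (r : ℕ)
          = (a r : ℂ) * ζ ^ (r : ℕ) - (a0 : ℂ) * ζ ^ (r : ℕ) := by
        intro r
        have : ((algebraMap ℚ ℂ) (b (r : ℕ))) = (a r : ℂ) - a0 := by
          rw [show ((algebraMap ℚ ℂ) (b (r : ℕ))) = ((b (r:ℕ) : ℚ) : ℂ) from rfl, hbfin r]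
        rw [this]; ring
      rw [Finset.sum_congr rfl (fun r _ => this r), Finset.sum_sub_distrib, hsum,
        ← Finset.mul_sum, hgeom, mul_zero, sub_zero]
    have hdvd : cyclotomic p ℚ ∣ f := by
      rw [cyclotomic_eq_minpoly_rat hprim hp.pos]
      exact minpoly.dvd ℚ ζ haev
    have hfz : f = 0 := by
      by_contra hfne
      obtain ⟨h, hfh⟩ := hdvd
      have hcycne : cyclotomic p ℚ ≠ 0 := cyclotomic_ne_zero p ℚ
      have hhne : h ≠ 0 := by rintro rfl; simp [hfh] at hfne
      have hdegf : f.natDegree ≤ p - 1 := by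
        rw [hf]
        apply natDegree_sum_le_of_forall_le
        intro i hi
        exact le_trans (natDegree_C_mul_X_pow_le _ _) (by simp at hi; omega)
      have hdegc : (cyclotomic p ℚ).natDegree = p - 1 := by
        rw [natDegree_cyclotomic, Nat.totient_prime hp]
      have hdeg : f.natDegree = (p - 1) + h.natDegree := by
        rw [hfh, natDegree_mul hcycne hhne, hdegc]
      have hh0 : h.natDegree = 0 := by omega
      obtain ⟨c, rfl⟩ := natDegree_eq_zero.mp hh0
      have hc0 : f.coeff 0 = (cyclotomic p ℚ).coeff 0 * c := by
        rw [hfh, mul_comm, coeff_C_mul]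
        ring
      have : (cyclotomic p ℚ).coeff 0 = 1 := by
        rw [cyclotomic_prime ℚ p, finset_sum_coeff]
        simp only [coeff_X_pow]
        rw [Finset.sum_ite_eq (range p) 0 (fun _ => (1:ℚ))]
        simp [hp.pos]
      rw [this, one_mul] at hc0
      have : f.coeff 0 = 0 := by
        rw [hcoeff 0, if_pos hp.pos, hb]
        simp [ha0]
      rw [this] at hc0
      rw [hfh, ← hc0, map_zero, mul_zero] at hfne
      exact hfne rfl
    intro r
    have : f.coeff (r : ℕ) = 0 := by rw [hfz]; simp
    rw [hcoeff, if_pos r.isLt] at this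
    have : (a r : ℚ) - a0 = 0 := by
      rw [hb] at this; simpa [r.isLt, Fin.eta] using this
    have := sub_eq_zero.mp this
    exact_mod_cast this
  · intro h
    calc (∑ r : Fin p, (a r : ℂ) * ζ ^ (r : ℕ))
        = ∑ r : Fin p, (a ⟨0, hp.pos⟩ : ℂ) * ζ ^ (r : ℕ) := by
          apply Finset.sum_congr rfl; intro r _; rw [h r]
      _ = (a ⟨0, hp.pos⟩ : ℂ) * ∑ r : Fin p, ζ ^ (r : ℕ) := by rw [Finset.mul_sum]
      _ = 0 := by rw [hgeom, mul_zero]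

lemma countB (m k : ℕ) (x : ℝ) :
    (∑ c : Fin m → Bool, if (Finset.univ.filter (fun j => c j = true)).card = k then x else 0)
      = (m.choose k : ℝ) * x := by
  classical
  let e : (Fin m → Bool) ≃ Finset (Fin m) :=
    { toFun := fun c => Finset.univ.filter (fun j => c j = true)
      invFun := fun s => fun j => j ∈ s
      left_inv := fun c => by ext j; simp
      right_inv := fun s => by ext j; simp }
  have step : ∀ s : Finset (Fin m),
      (if (Finset.univ.filter (fun j => e.symm s j = true)).card = k then x else 0)
        = if s.card = k then x else 0 := by
    intro s
    have : Finset.univ.filter (fun j => e.symm s j = true) = s := e.right_inv s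
    rw [this]
  rw [← Equiv.sum_comp e.symm
    (fun c => if (Finset.univ.filter (fun j => c j = true)).card = k then x else 0)]
  rw [Finset.sum_congr rfl (fun s _ => step s)]
  rw [← Finset.sum_filter]
  have : Finset.univ.filter (fun s : Finset (Fin m) => s.card = k)
      = Finset.powersetCard k Finset.univ := by
    rw [Finset.powersetCard_eq_filter, Finset.powerset_univ]
  rw [this, Finset.sum_const, Finset.card_powersetCard, Finset.card_univ, Fintype.card_fin,
    nsmul_eq_mul]
end Aux

/-- Equation (3): for a prime divisor p of n, P_q(p,n) = ∑_{k=0}^{n/p} φ_q(k, n/p)^p. -/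
theorem Pqd_prime (q : ℝ) (hq0 : 0 < q) (hq1 : q < 1) (n : ℕ) (hn : 0 < n)
    (p : ℕ) (hp : p.Prime) (hpn : p ∣ n) :
    Pqd q p n = ∑ k ∈ Finset.range (n / p + 1), phi q k (n / p) ^ p := by
  classical
  obtain ⟨m, rfl⟩ := hpn
  have hdiv : p * m / p = m := Nat.mul_div_cancel_left m hp.pos
  rw [hdiv]
  set ζ : ℂ := Complex.exp (2 * Real.pi * Complex.I / p) with hζdef
  have hprim : IsPrimitiveRoot ζ p := Complex.isPrimitiveRoot_exp p hp.ne_zero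
  set cnt : (Fin m → Bool) → ℕ := fun c => (Finset.univ.filter (fun j => c j = true)).card
    with hcnt
  have hcntle : ∀ c, cnt c ≤ m := fun c =>
    le_trans (Finset.card_filter_le _ _) (by simp)
  set w : (Fin m → Bool) → ℝ := fun c => q ^ cnt c * (1 - q) ^ (m - cnt c) with hw
  set e : Fin p × Fin m ≃ Fin (p * m) :=
    (Equiv.prodComm (Fin p) (Fin m)).trans (finProdFinEquiv.trans (finCongr (mul_comm m p)))
    with he
  have heval : ∀ (r : Fin p) (s : Fin m), ((e (r, s)) : ℕ) = (r : ℕ) + p * (s : ℕ) := by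
    intro r s
    simp [he, finProdFinEquiv]
  set E : (Fin p → Fin m → Bool) ≃ (Fin (p * m) → Bool) :=
    (Equiv.curry (Fin p) (Fin m) Bool).symm.trans (Equiv.arrowCongr e (Equiv.refl Bool))
    with hE
  have hEapp : ∀ (C : Fin p → Fin m → Bool) (x : Fin p × Fin m),
      E C (e x) = C x.1 x.2 := by
    intro C x
    simp only [hE, Equiv.trans_apply, Equiv.arrowCongr_apply, Equiv.coe_refl, Equiv.symm_apply_apply, Function.comp_apply]
    rfl
  -- Step A: condition equivalence
  have hcond : ∀ C : Fin p → Fin m → Bool,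
      ((∑ j : Fin (p * m), (if E C j then (1 : ℂ) else 0) * ζ ^ (j : ℕ)) = 0)
        ↔ (∀ r, cnt (C r) = cnt (C ⟨0, hp.pos⟩)) := by
    intro C
    have h1 : (∑ j : Fin (p * m), (if E C j then (1 : ℂ) else 0) * ζ ^ (j : ℕ))
        = ∑ r : Fin p, (cnt (C r) : ℂ) * ζ ^ (r : ℕ) := by
      rw [← Fintype.sum_equiv e
        (fun x : Fin p × Fin m => (if E C (e x) then (1 : ℂ) else 0) * ζ ^ ((e x : ℕ)))
        (fun j => (if E C j then (1 : ℂ) else 0) * ζ ^ (j : ℕ)) (fun x => rfl)]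
      rw [Fintype.sum_prod_type]
      apply Finset.sum_congr rfl
      intro r _
      have : ∀ s : Fin m, (if E C (e (r, s)) then (1 : ℂ) else 0) * ζ ^ ((e (r, s) : ℕ))
          = (if C r s then (1 : ℂ) else 0) * ζ ^ (r : ℕ) := by
        intro s
        rw [hEapp C (r, s), heval, pow_add, pow_mul, hprim.pow_eq_one, one_pow, mul_one]
      rw [Finset.sum_congr rfl (fun s _ => this s), ← Finset.sum_mul]
      congr 1
      rw [hcnt]
      rw [Finset.sum_boole]
    rw [h1]
    exact keyA hp (fun r => cnt (C r))
  -- Step A': weight factorization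
  have hweight : ∀ C : Fin p → Fin m → Bool,
      bernWeight q (p * m) (E C) = ∏ r : Fin p, w (C r) := by
    intro C
    have hcard : (Finset.univ.filter (fun j => E C j = true)).card = ∑ r : Fin p, cnt (C r) := by
      rw [Finset.card_filter]
      rw [← Fintype.sum_equiv e
        (fun x : Fin p × Fin m => if E C (e x) = true then 1 else 0)
        (fun j => if E C j = true then 1 else 0) (fun x => rfl)]
      rw [Fintype.sum_prod_type]
      apply Finset.sum_congr rfl
      intro r _
      rw [Finset.sum_congr rfl (fun s _ => by rw [hEapp C (r, s)])]
      rw [hcnt]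
      exact (Finset.card_filter _ _).symm
    have hsub : p * m - ∑ r : Fin p, cnt (C r) = ∑ r : Fin p, (m - cnt (C r)) := by
      have h1 : ∑ r : Fin p, (m - cnt (C r)) + ∑ r : Fin p, cnt (C r) = p * m := by
        rw [← Finset.sum_add_distrib]
        rw [Finset.sum_congr rfl (fun r _ => Nat.sub_add_cancel (hcntle (C r)))]
        simp [mul_comm]
      omega
    rw [bernWeight, hcard, hsub, ← Finset.prod_pow_eq_pow_sum, ← Finset.prod_pow_eq_pow_sum,
      ← Finset.prod_mul_distrib]
  -- Step A transfer
  have stepA : Pqd q p (p * m)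
      = ∑ C : Fin p → Fin m → Bool,
          if (∀ r, cnt (C r) = cnt (C ⟨0, hp.pos⟩)) then ∏ r : Fin p, w (C r) else 0 := by
    rw [Pqd]
    rw [← Fintype.sum_equiv E
      (fun C => if (∑ j : Fin (p * m), (if E C j then (1 : ℂ) else 0) * ζ ^ (j : ℕ)) = 0 then
          bernWeight q (p * m) (E C) else 0)
      (fun c => if (∑ j : Fin (p * m), (if c j then (1 : ℂ) else 0) * ζ ^ (j : ℕ)) = 0 then
          bernWeight q (p * m) c else 0) (fun C => rfl)]
    apply Finset.sum_congr rfl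
    intro C _
    rw [hweight C]
    exact if_congr (hcond C) rfl rfl
  rw [stepA]
  -- Step B: introduce k
  have stepB : ∀ C : Fin p → Fin m → Bool,
      (if (∀ r, cnt (C r) = cnt (C ⟨0, hp.pos⟩)) then ∏ r : Fin p, w (C r) else 0)
        = ∑ k ∈ Finset.range (m + 1),
            if (∀ r, cnt (C r) = k) then ∏ r : Fin p, w (C r) else 0 := by
    intro C
    rw [Finset.sum_eq_single_of_mem (cnt (C ⟨0, hp.pos⟩))
      (Finset.mem_range.mpr (Nat.lt_succ_of_le (hcntle _)))]
    intro k _ hkne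
    rw [if_neg]
    intro hall
    exact hkne ((hall ⟨0, hp.pos⟩).symm ▸ rfl)
  rw [Finset.sum_congr rfl (fun C _ => stepB C), Finset.sum_comm]
  apply Finset.sum_congr rfl
  intro k hk
  -- Step C: factor over r
  have stepC : ∀ C : Fin p → Fin m → Bool,
      (if (∀ r, cnt (C r) = k) then ∏ r : Fin p, w (C r) else 0)
        = ∏ r : Fin p, (if cnt (C r) = k then w (C r) else 0) := by
    intro C
    by_cases h : ∀ r, cnt (C r) = k
    · rw [if_pos h]
      apply Finset.prod_congr rfl
      intro r _
      rw [if_pos (h r)]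
    · rw [if_neg h]
      push_neg at h
      obtain ⟨r, hr⟩ := h
      exact (Finset.prod_eq_zero (Finset.mem_univ r) (by rw [if_neg hr])).symm
  rw [Finset.sum_congr rfl (fun C _ => stepC C)]
  have hprodsum := Finset.prod_univ_sum (fun _ : Fin p => (Finset.univ : Finset (Fin m → Bool)))
      (fun _ c => if cnt c = k then w c else 0)
  rw [Fintype.piFinset_univ] at hprodsum
  rw [← hprodsum]
  have hinner : (∑ c : Fin m → Bool, if cnt c = k then w c else 0) = phi q k m := by
    have : ∀ c : Fin m → Bool, (if cnt c = k then w c else 0)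
        = (if cnt c = k then q ^ k * (1 - q) ^ (m - k) else 0) := by
      intro c
      by_cases h : cnt c = k
      · rw [if_pos h, if_pos h]
        simp only [hw]
        rw [h]
      · rw [if_neg h, if_neg h]
    rw [Finset.sum_congr rfl (fun c _ => this c), countB m k (q ^ k * (1 - q) ^ (m - k)), phi]
    ring
  rw [Finset.prod_congr rfl (fun r _ => hinner), Finset.prod_const, Finset.card_univ,
    Fintype.card_fin]
end

section
/- (de Moivre–Laplace with uniform error O(1/√n)) Let q ∈ (0,1) and c > 0 be fixed real numbers. There exist constants C > 0 and N > 0 such that for all integers n > N and all integers k with 0 ≤ k ≤ n and |k − nq| ≤ c√n, |φ_q(k,n) · √(2πnq(1−q)) · e^{(k−nq)²/(2nq(1−q))} − 1| ≤ C/√n. -/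
/-!
Put `x = k - nq`. Stirling's formula in Robbins' form, `log m! = m log m - m + log (2πm) / 2 + r m`
with `0 ≤ r m ≤ 1 / (12 m)`, writes the logarithm of
`φ_q(k, n) √(2πnq(1-q)) exp (x² / (2nq(1-q)))` as `r n - r k - r (n - k)`, minus
`(nq + x) log (1 + x / (nq)) - x - x² / (2nq)` and its analogue for `1 - q` and `-x`,
minus `log ((1 + x / (nq)) (1 - x / (n(1-q)))) / 2`. For `|x| ≤ c√n` these are
`O(1/n)`, `O(|x|³/n²)` and `O(|x|/n)`, all `O(1/√n)`; finally `|eᴸ - 1| ≤ 2|L|` once `|L| ≤ 1`.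
-/

open Finset

open Filter Real
open scoped Nat

namespace Stirling

noncomputable def stirlingRemainder (n : ℕ) : ℝ := log (stirlingSeq n) - log √π

theorem log_factorial_eq {n : ℕ} (hn : n ≠ 0) :
    log n ! = n * log n - n + log (2 * π * n) / 2 + stirlingRemainder n := by
  have : 0 < (n : ℝ) := by positivity
  rw [stirlingRemainder, log_stirlingSeq_formula, log_div this.ne' (exp_pos 1).ne', log_exp,
    log_sqrt pi_pos.le, log_mul (by positivity) this.ne', log_mul (by norm_num) pi_pos.ne',
    log_mul (by norm_num) this.ne']
  ring

theorem log_stirlingSeq_sub_log_stirlingSeq_add_le {n : ℕ} (hn : n ≠ 0) (j : ℕ) :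
    log (stirlingSeq n) - log (stirlingSeq (n + j)) ≤ 1 / (12 * n) - 1 / (12 * (n + j : ℕ)) := by
  induction j with
  | zero => simp
  | succ j ih =>
    have step := log_stirlingSeq_sdiff_le (n + j)
    have telescope : (1 : ℝ) / (12 * (n + j : ℕ) * ((n + j : ℕ) + 1)) =
        1 / (12 * (n + j : ℕ)) - 1 / (12 * (n + (j + 1) : ℕ)) := by
      have : (0 : ℝ) < (n + j : ℕ) := by positivity
      push_cast at this ⊢
      field_simp
      ring
    rw [← add_assoc] at *
    linarith

theorem stirlingRemainder_nonneg {n : ℕ} (hn : n ≠ 0) : 0 ≤ stirlingRemainder n :=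
  sub_nonneg.2 <| log_le_log (by positivity) (sqrt_pi_le_stirlingSeq hn)

theorem stirlingRemainder_le {n : ℕ} (hn : n ≠ 0) : stirlingRemainder n ≤ 1 / (12 * n) := by
  have hlim : Tendsto (fun j ↦ log (stirlingSeq n) - log (stirlingSeq (n + j))) atTop
      (nhds (stirlingRemainder n)) :=
    tendsto_const_nhds.sub <| ((continuousAt_log (by positivity)).tendsto).comp <|
      tendsto_stirlingSeq_sqrt_pi.comp (tendsto_add_atTop_nat n) |>.congr fun j ↦ by
        simp [add_comm]
  refine le_of_tendsto hlim (Eventually.of_forall fun j ↦ ?_)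
  have : (0 : ℝ) ≤ 1 / (12 * (n + j : ℕ)) := by positivity
  linarith [log_stirlingSeq_sub_log_stirlingSeq_add_le hn j]

end Stirling

namespace Real

theorem abs_log_one_add_le {u : ℝ} (hu : |u| ≤ 1 / 2) : |log (1 + u)| ≤ 2 * |u| := by
  have h := abs_log_sub_add_sum_range_le (x := -u) (by rw [abs_neg]; linarith) 0
  rw [abs_neg, sub_neg_eq_add] at h
  simp only [range_zero, sum_empty, zero_add, pow_one] at h
  refine h.trans ?_
  rw [div_le_iff₀ (by linarith)]
  nlinarith [abs_nonneg u]

theorem abs_log_one_add_sub_le {u : ℝ} (hu : |u| ≤ 1 / 2) :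
    |log (1 + u) - (u - u ^ 2 / 2)| ≤ 2 * |u| ^ 3 := by
  have h := abs_log_sub_add_sum_range_le (x := -u) (by rw [abs_neg]; linarith) 2
  rw [abs_neg, sub_neg_eq_add] at h
  have : ∑ i ∈ range 2, (-u) ^ (i + 1) / (i + 1 : ℝ) = -(u - u ^ 2 / 2) := by
    rw [sum_range_succ, sum_range_one]; push_cast; ring
  rw [this, neg_add_eq_sub] at h
  refine h.trans ?_
  rw [div_le_iff₀ (by linarith)]
  nlinarith [pow_nonneg (abs_nonneg u) 3, pow_succ |u| 2]

theorem abs_div_le_half {Q T : ℝ} (hQ : 0 < Q) (hT : |T| ≤ Q / 2) : |T / Q| ≤ 1 / 2 := by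
  rwa [abs_div, abs_of_pos hQ, div_le_iff₀ hQ, div_mul_eq_mul_div, one_mul]

theorem abs_log_one_add_div_le {Q T : ℝ} (hQ : 0 < Q) (hT : |T| ≤ Q / 2) :
    |log (1 + T / Q)| ≤ 2 * |T| / Q := by
  have := abs_log_one_add_le (abs_div_le_half hQ hT)
  rwa [abs_div, abs_of_pos hQ, ← mul_div_assoc] at this

theorem abs_add_mul_log_one_add_div_sub_le {Q T : ℝ} (hQ : 0 < Q) (hT : |T| ≤ Q / 2) :
    |(Q + T) * log (1 + T / Q) - (T + T ^ 2 / (2 * Q))| ≤ 4 * |T| ^ 3 / Q ^ 2 := by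
  have hu := abs_div_le_half hQ hT
  set r := log (1 + T / Q) - (T / Q - (T / Q) ^ 2 / 2) with hr
  have hr_le : |r| ≤ 2 * |T| ^ 3 / Q ^ 3 := by
    have := abs_log_one_add_sub_le hu
    rw [abs_div, abs_of_pos hQ] at this
    exact this.trans_eq (by ring)
  have expand : (Q + T) * log (1 + T / Q) - (T + T ^ 2 / (2 * Q)) =
      (Q + T) * r - T ^ 3 / (2 * Q ^ 2) := by
    rw [hr]; field_simp; ring
  have hQT : |Q + T| ≤ 3 * Q / 2 := by
    rw [abs_le] at hT ⊢; constructor <;> linarith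
  rw [expand]
  calc |(Q + T) * r - T ^ 3 / (2 * Q ^ 2)| ≤ |Q + T| * |r| + |T| ^ 3 / (2 * Q ^ 2) := by
        refine (abs_sub _ _).trans ?_
        rw [abs_mul, abs_div, abs_pow, abs_of_pos (by positivity : (0 : ℝ) < 2 * Q ^ 2)]
    _ ≤ 3 * Q / 2 * (2 * |T| ^ 3 / Q ^ 3) + |T| ^ 3 / (2 * Q ^ 2) := by gcongr
    _ ≤ 4 * |T| ^ 3 / Q ^ 2 := by
        have : 0 ≤ |T| ^ 3 / Q ^ 2 := by positivity
        field_simp; nlinarith [pow_nonneg (abs_nonneg T) 3]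

end Real

open Stirling

theorem log_add_choose_mul_pow_mul_pow_eq {a b : ℕ} (ha : a ≠ 0) (hb : b ≠ 0) {q p : ℝ} (hq : 0 < q)
    (hp : 0 < p) :
    log ((a + b).choose a * q ^ a * p ^ b) + log (2 * π * (a + b) * q * p) / 2 =
      stirlingRemainder (a + b) - stirlingRemainder a - stirlingRemainder b
        - (a + 1 / 2) * log (a / ((a + b) * q)) - (b + 1 / 2) * log (b / ((a + b) * p)) := by
  have ha' : (0 : ℝ) < a := by positivity
  have hb' : (0 : ℝ) < b := by positivity
  have hab : a + b ≠ 0 := by omega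
  rw [Nat.cast_add_choose, log_mul (by positivity) (by positivity),
    log_mul (by positivity) (by positivity), log_div (by positivity) (by positivity),
    log_mul (by positivity) (by positivity), log_factorial_eq hab, log_factorial_eq ha,
    log_factorial_eq hb]
  simp (disch := positivity) only [log_mul, log_div, log_pow, Nat.cast_add]
  ring

theorem phi_pos {q : ℝ} (hq0 : 0 < q) (hq1 : q < 1) {n k : ℕ} (hkn : k ≤ n) : 0 < phi q k n := by
  have := Nat.choose_pos hkn
  have : 0 < 1 - q := by linarith
  unfold phi
  positivity

theorem abs_stirlingRemainder_add_sub_sub_le {a b : ℕ} (ha : a ≠ 0) (hb : b ≠ 0) :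
    |stirlingRemainder (a + b) - stirlingRemainder a - stirlingRemainder b| ≤
      1 / (12 * a) + 1 / (12 * b) := by
  have hab : a + b ≠ 0 := by omega
  have hmono : 1 / (12 * (a + b : ℕ) : ℝ) ≤ 1 / (12 * a) :=
    one_div_le_one_div_of_le (by positivity) (by push_cast; linarith [b.cast_nonneg (α := ℝ)])
  rw [abs_le]
  constructor <;> linarith [stirlingRemainder_le hab, stirlingRemainder_le ha,
    stirlingRemainder_le hb, stirlingRemainder_nonneg hab, stirlingRemainder_nonneg ha,
    stirlingRemainder_nonneg hb, one_div_nonneg.2 (by positivity : (0 : ℝ) ≤ 12 * b)]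

theorem log_phi_mul_sqrt_mul_exp_eq {q : ℝ} (hq0 : 0 < q) (hq1 : q < 1) {n k : ℕ} (hk0 : k ≠ 0)
    (hkn : k < n) {x : ℝ} (hx : (k : ℝ) = n * q + x) :
    log (phi q k n * √(2 * π * n * q * (1 - q)) * exp (x ^ 2 / (2 * n * q * (1 - q)))) =
      stirlingRemainder n - stirlingRemainder k - stirlingRemainder (n - k)
        - ((n * q + x) * log (1 + x / (n * q)) - (x + x ^ 2 / (2 * (n * q))))
        - ((n * (1 - q) + -x) * log (1 + -x / (n * (1 - q)))
            - (-x + (-x) ^ 2 / (2 * (n * (1 - q)))))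
        - log (1 + x / (n * q)) / 2 - log (1 + -x / (n * (1 - q))) / 2 := by
  have hn : (0 : ℝ) < n := by exact_mod_cast (Nat.pos_of_ne_zero hk0).trans hkn
  have hp : 0 < 1 - q := by linarith
  have identity := log_add_choose_mul_pow_mul_pow_eq hk0 (Nat.sub_ne_zero_of_lt hkn) hq0 hp
  rw [Nat.add_sub_cancel' hkn.le, Nat.cast_sub hkn.le, add_sub_cancel] at identity
  have hu : (k : ℝ) / (n * q) = 1 + x / (n * q) := by rw [hx]; field_simp
  have hv : ((n : ℝ) - k) / (n * (1 - q)) = 1 + -x / (n * (1 - q)) := by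
    rw [hx]; field_simp; ring
  rw [hu, hv] at identity
  have hphi := phi_pos hq0 hq1 hkn.le
  rw [log_mul (by positivity) (by positivity), log_mul (by positivity) (by positivity),
    log_exp, log_sqrt (by positivity), phi, identity, hx]
  -- the quadratic terms recombine since `1 / q + 1 / (1 - q) = 1 / (q * (1 - q))`
  field_simp
  ring

theorem abs_log_phi_mul_sqrt_mul_exp_le {q : ℝ} (hq0 : 0 < q) (hq1 : q < 1) {n k : ℕ} (hn : n ≠ 0)
    (hxq : |(k : ℝ) - n * q| ≤ n * q / 2) (hxp : |(k : ℝ) - n * q| ≤ n * (1 - q) / 2) :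
    |log (phi q k n * √(2 * π * n * q * (1 - q)) *
        exp (((k : ℝ) - n * q) ^ 2 / (2 * n * q * (1 - q))))| ≤
      (1 + |(k : ℝ) - n * q|) / (n * q) + (1 + |(k : ℝ) - n * q|) / (n * (1 - q)) +
        4 * |(k : ℝ) - n * q| ^ 3 / (n * q) ^ 2 +
        4 * |(k : ℝ) - n * q| ^ 3 / (n * (1 - q)) ^ 2 := by
  have hn' : (0 : ℝ) < n := by positivity
  have hp : 0 < 1 - q := by linarith
  have hk : (n : ℝ) * q / 2 ≤ k := by linarith [(abs_le.mp hxq).1]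
  have hnk : (n : ℝ) * (1 - q) / 2 ≤ n - k := by linarith [(abs_le.mp hxp).2]
  have hkn : k < n := by exact_mod_cast (by nlinarith : (k : ℝ) < n)
  have hk0 : k ≠ 0 := Nat.cast_ne_zero.1 (by nlinarith [mul_pos hn' hq0] : (0 : ℝ) < k).ne'
  rw [log_phi_mul_sqrt_mul_exp_eq hq0 hq1 hk0 hkn (x := k - n * q) (by ring)]
  set x := (k : ℝ) - n * q
  have hr := abs_stirlingRemainder_add_sub_sub_le hk0 (Nat.sub_ne_zero_of_lt hkn)
  rw [Nat.add_sub_cancel' hkn.le, Nat.cast_sub hkn.le] at hr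
  have hrk : 1 / (12 * (k : ℝ)) ≤ 1 / (n * q) :=
    one_div_le_one_div_of_le (by positivity) (by linarith)
  have hrnk : 1 / (12 * ((n : ℝ) - k)) ≤ 1 / (n * (1 - q)) :=
    one_div_le_one_div_of_le (by positivity) (by linarith [mul_pos hn' hp])
  have hQ := abs_add_mul_log_one_add_div_sub_le (by positivity) hxq
  have hP := abs_add_mul_log_one_add_div_sub_le (by positivity) ((abs_neg x).trans_le hxp)
  have hu := abs_log_one_add_div_le (by positivity) hxq
  have hv := abs_log_one_add_div_le (by positivity) ((abs_neg x).trans_le hxp)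
  rw [abs_neg] at hP hv
  rw [mul_div_assoc] at hu hv
  simp only [add_div]
  rw [abs_le] at hr hQ hP hu hv ⊢
  constructor <;> linarith [hr.1, hr.2, hQ.1, hQ.2, hP.1, hP.2, hu.1, hu.2, hv.1, hv.2]

theorem one_add_div_add_four_mul_pow_three_div_le {q c y s : ℝ} (hq : 0 < q) (hs : 1 ≤ s)
    (hy : 0 ≤ y) (hys : y ≤ c * s) :
    (1 + y) / (s ^ 2 * q) + 4 * y ^ 3 / (s ^ 2 * q) ^ 2 ≤
      ((1 + c) / q + 4 * c ^ 3 / q ^ 2) / s := by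
  have hs0 : 0 < s := by linarith
  have h1 : (1 + y) / (s ^ 2 * q) ≤ (1 + c) / q / s := by
    rw [div_div, div_le_div_iff₀ (by positivity) (by positivity)]
    have : 1 + y ≤ (1 + c) * s := by linarith
    calc (1 + y) * (q * s) ≤ (1 + c) * s * (q * s) := by gcongr
      _ = (1 + c) * (s ^ 2 * q) := by ring
  have h2 : 4 * y ^ 3 / (s ^ 2 * q) ^ 2 ≤ 4 * c ^ 3 / q ^ 2 / s := by
    rw [div_div, div_le_div_iff₀ (by positivity) (by positivity)]
    calc 4 * y ^ 3 * (q ^ 2 * s) ≤ 4 * (c * s) ^ 3 * (q ^ 2 * s) := by gcongr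
      _ = 4 * c ^ 3 * (s ^ 2 * q) ^ 2 := by ring
  calc _ ≤ (1 + c) / q / s + 4 * c ^ 3 / q ^ 2 / s := add_le_add h1 h2
    _ = _ := by ring

theorem mul_sqrt_le_mul_div_two {c q n : ℝ} (hq : 0 < q) (hn : 0 ≤ n) (h : 2 * c / q ≤ √n) :
    c * √n ≤ n * q / 2 := by
  rw [div_le_iff₀' hq] at h
  have := mul_le_mul_of_nonneg_right h (sqrt_nonneg n)
  rw [mul_assoc q, mul_self_sqrt hn] at this
  linarith

theorem abs_log_phi_mul_sqrt_mul_exp_le_div_sqrt {q c : ℝ} (hq0 : 0 < q) (hq1 : q < 1) {n k : ℕ}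
    (hn : n ≠ 0) (hcq : 2 * c / q ≤ √n) (hcp : 2 * c / (1 - q) ≤ √n)
    (hx : |(k : ℝ) - n * q| ≤ c * √n) :
    |log (phi q k n * √(2 * π * n * q * (1 - q)) *
        exp (((k : ℝ) - n * q) ^ 2 / (2 * n * q * (1 - q))))| ≤
      ((1 + c) / q + 4 * c ^ 3 / q ^ 2 + ((1 + c) / (1 - q) + 4 * c ^ 3 / (1 - q) ^ 2)) / √n := by
  have hp : 0 < 1 - q := by linarith
  have hs : 1 ≤ √n := one_le_sqrt.2 (by exact_mod_cast Nat.one_le_iff_ne_zero.2 hn)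
  have hlog := abs_log_phi_mul_sqrt_mul_exp_le hq0 hq1 hn
    (hx.trans (mul_sqrt_le_mul_div_two hq0 n.cast_nonneg hcq))
    (hx.trans (mul_sqrt_le_mul_div_two hp n.cast_nonneg hcp))
  have hEq := one_add_div_add_four_mul_pow_three_div_le hq0 hs (abs_nonneg _) hx
  have hEp := one_add_div_add_four_mul_pow_three_div_le hp hs (abs_nonneg _) hx
  rw [sq_sqrt n.cast_nonneg] at hEq hEp
  rw [add_div]
  linarith

/-- Lemma 4.1 (de Moivre–Laplace, first part): uniformly over |k − nq| ≤ c√n,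
φ_q(k,n) = (2πnq(1−q))^{-1/2} e^{-(k−nq)²/(2nq(1−q))} (1 + O(1/√n)). -/
theorem deMoivreLaplace_sqrt (q c : ℝ) (hq0 : 0 < q) (hq1 : q < 1) (hc : 0 < c) :
    ∃ C > (0 : ℝ), ∃ N : ℕ, ∀ n : ℕ, n > N → ∀ k : ℕ, k ≤ n →
      |(k : ℝ) - n * q| ≤ c * Real.sqrt n →
      |phi q k n * Real.sqrt (2 * Real.pi * n * q * (1 - q)) *
          Real.exp (((k : ℝ) - n * q) ^ 2 / (2 * n * q * (1 - q))) - 1|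
        ≤ C / Real.sqrt n := by
  have hp : 0 < 1 - q := by linarith
  set K := (1 + c) / q + 4 * c ^ 3 / q ^ 2 + ((1 + c) / (1 - q) + 4 * c ^ 3 / (1 - q) ^ 2)
  have hsqrt := tendsto_sqrt_atTop.comp tendsto_natCast_atTop_atTop
  obtain ⟨N, hN⟩ := eventually_atTop.1 <| (eventually_ne_atTop 0).and <|
    (hsqrt.eventually_ge_atTop (2 * c / q)).and <|
      (hsqrt.eventually_ge_atTop (2 * c / (1 - q))).and (hsqrt.eventually_ge_atTop K)
  refine ⟨2 * K, by positivity, N, fun n hn k hkn hx ↦ ?_⟩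
  obtain ⟨hn0, hcq, hcp, hK⟩ := hN n hn.le
  have hL := abs_log_phi_mul_sqrt_mul_exp_le_div_sqrt hq0 hq1 hn0 hcq hcp hx
  have hpos : 0 < phi q k n * √(2 * π * n * q * (1 - q)) *
      exp (((k : ℝ) - n * q) ^ 2 / (2 * n * q * (1 - q))) := by
    have := phi_pos hq0 hq1 hkn
    positivity
  rw [← exp_log hpos]
  calc _ ≤ 2 * |log _| :=
        abs_exp_sub_one_le (hL.trans ((div_le_one (by positivity)).2 hK))
    _ ≤ 2 * K / √n := by rw [mul_div_assoc]; gcongr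
end

section
/- (Dedekind's factorization of the group determinant) Let G be a finite abelian group and let x : G → ℂ be any function. Then the determinant of the G×G matrix whose (g,h) entry is x(g·h⁻¹) equals the product over all characters χ of G (homomorphisms χ : G → ℂˣ) of ∑_{g ∈ G} x(g)·χ(g). -/
/-- Theorem 2.1 (Dedekind): for a finite abelian group G and any x : G → ℂ, the
determinant of the G-matrix with (g,h) entry x(g h⁻¹) equals the product over all
characters χ : G →* ℂˣ of ∑_{g ∈ G} x(g) χ(g). -/
theorem group_determinant_factorization (G : Type*) [CommGroup G] [Fintype G]
    [DecidableEq G] [Fintype (G →* ℂˣ)] (x : G → ℂ) :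
    (Matrix.of fun g h : G => x (g * h⁻¹)).det =
      ∏ χ : G →* ℂˣ, ∑ g : G, x g * (χ g : ℂ) := by
  classical
  obtain ⟨e⟩ := CommGroup.monoidHom_mulEquiv_of_hasEnoughRootsOfUnity G ℂ
  set χ : G → (G →* ℂˣ) := fun a => e.symm a with hχ
  set M : Matrix G G ℂ := Matrix.of fun g h : G => x (g * h⁻¹) with hM
  set U : Matrix G G ℂ := Matrix.of fun a h => (χ a h : ℂ) with hU
  set V : Matrix G G ℂ := Matrix.of fun g b => ((χ b) g⁻¹ : ℂ) with hV
  have hUV : U * V = (Fintype.card G : ℂ) • 1 := by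
    ext a b
    simp only [Matrix.mul_apply, hU, hV, Matrix.of_apply, Matrix.smul_apply,
      Matrix.one_apply, smul_eq_mul]
    by_cases hab : a = b
    · subst hab
      simp only [if_true]
      rw [Finset.sum_congr rfl (fun g _ => ?_), Finset.sum_const, Finset.card_univ,
        nsmul_eq_mul, mul_one]
      rw [← Units.val_mul, ← map_mul, mul_inv_cancel, map_one, Units.val_one]
    · rw [if_neg hab, mul_zero]
      have h0 : ∑ g : G, ((Units.coeHom ℂ).comp (χ a * (χ b)⁻¹)) g = 0 := by
        apply sum_hom_units_eq_zero
        intro hf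
        apply hab
        have : χ a = χ b := by
          ext g
          have := congrFun (congrArg (fun f : G →* ℂ => (f : G → ℂ)) hf) g
          simp only [MonoidHom.coe_comp, Function.comp_apply, Units.coeHom_apply,
            MonoidHom.mul_apply, MonoidHom.inv_apply, MonoidHom.one_apply] at this
          have h2 : (χ a g * (χ b g)⁻¹ : ℂˣ) = 1 := Units.ext (by simpa using this)
          have := mul_inv_eq_one.mp h2
          exact_mod_cast congrArg Units.val this
        exact e.symm.injective this
      rw [← h0]
      apply Finset.sum_congr rfl
      intro g _
      simp only [MonoidHom.coe_comp, Function.comp_apply, Units.coeHom_apply,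
        MonoidHom.mul_apply, MonoidHom.inv_apply, Units.val_mul]
      congr 1
      rw [← map_inv]
  have hdetU : U.det ≠ 0 := by
    intro h
    have := congrArg Matrix.det hUV
    rw [Matrix.det_mul, h, zero_mul, Matrix.det_smul, Matrix.det_one, mul_one] at this
    have hc : ((Fintype.card G : ℂ)) ^ Fintype.card G ≠ 0 := by
      apply pow_ne_zero
      exact_mod_cast Fintype.card_ne_zero
    exact hc this.symm
  set D : Matrix G G ℂ := Matrix.diagonal (fun a => ∑ g : G, x g * (χ a g : ℂ)) with hD
  have hUM : U * M = D * U := by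
    ext a h
    rw [Matrix.mul_apply, hD, Matrix.diagonal_mul]
    simp only [hU, hM, Matrix.of_apply]
    rw [Finset.sum_mul]
    apply Fintype.sum_equiv (Equiv.mulRight h⁻¹)
    intro k
    simp only [Equiv.coe_mulRight]
    rw [mul_assoc, ← Units.val_mul, ← map_mul, inv_mul_cancel_right]
    ring
  have hdet : U.det * M.det = D.det * U.det := by
    rw [← Matrix.det_mul, ← Matrix.det_mul, hUM]
  have hMdet : M.det = D.det := by
    have := hdet
    rw [mul_comm U.det M.det] at this
    exact mul_right_cancel₀ hdetU this
  rw [hMdet, hD, Matrix.det_diagonal]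
  exact (Fintype.prod_equiv e.toEquiv (fun c => ∑ g : G, x g * (c g : ℂ))
    (fun a => ∑ g : G, x g * ((χ a) g : ℂ)) (fun c => by simp [hχ])).symm
end

section
/- Let p and r be distinct primes, let ζ = exp(2πi/(pr)) be a primitive pr-th root of unity in ℂ, and let c_0, …, c_{pr−1} ∈ {0,1}. If ∑_{j=0}^{pr−1} c_j ζ^j = 0, then ∑_{j=0}^{pr−1} c_j ζ^{rj} = 0 or ∑_{j=0}^{pr−1} c_j ζ^{pj} = 0 (note ζ^r is a primitive p-th root of unity and ζ^p is a primitive r-th root of unity). Equivalently, if the polynomial f(x) = ∑_{j=0}^{pr−1} c_j x^j with coefficients in {0,1} is divisible by Φ_{pr}(x), then it is divisible by Φ_p(x) or by Φ_r(x). -/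
/-!
Index `j < p * r` by its residues `(a, b) = (j mod p, j mod r)` and let `m a b ∈ {0, 1}` be the
coefficient of the `j` with these residues. Since the coefficients are rational, the relation at
`ζ` holds at every Galois conjugate `ω * ν` of `ζ` (`ω`, `ν` primitive `p`-th and `r`-th roots),
i.e. `∑ a b, m a b * ω ^ a * ν ^ b = 0`. For fixed `ω` this is a polynomial of degree `< r` in `ν`
vanishing at all roots of `Φ_r`, so it is a multiple of `Φ_r = 1 + X + ⋯ + X ^ (r - 1)`: the column
sums `∑ a, m a b * ω ^ a` do not depend on `b`. By the same argument over `ℚ` for `Φ_p`, the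
differences `m a b - m a 0` do not depend on `a`. For a `0/1` matrix this forces all columns or all
rows to be constant, and the sum at `ζ ^ r`, resp. `ζ ^ p`, is then a sum of multiples of
`∑ a, (ζ ^ r) ^ a = 0`, resp. `∑ b, (ζ ^ p) ^ b = 0`.
-/

open Finset Polynomial

theorem Finset.sum_range_mul_eq_sum_chineseRemainder {M : Type*} [AddCommMonoid M] {m n : ℕ}
    (co : m.Coprime n) (f : ℕ → M) :
    ∑ j ∈ range (m * n), f j = ∑ a ∈ range m, ∑ b ∈ range n, f (Nat.chineseRemainder co a b) := by
  rcases eq_or_ne m 0 with rfl | hm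
  · simp
  rcases eq_or_ne n 0 with rfl | hn
  · simp
  have crt_lt (a b : ℕ) := Nat.chineseRemainder_lt_mul co a b hm hn
  have crt_mod_mod (j : ℕ) (hj : j ∈ range (m * n)) :
      (Nat.chineseRemainder co (j % m) (j % n) : ℕ) = j :=
    (Nat.chineseRemainder_modEq_unique co (Nat.mod_modEq j m).symm
      (Nat.mod_modEq j n).symm).symm.eq_of_lt_of_lt (crt_lt _ _) (mem_range.mp hj)
  rw [← sum_product']
  refine sum_nbij' (fun j => (j % m, j % n)) (fun ab => Nat.chineseRemainder co ab.1 ab.2)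
    (fun j _ => by simp [Nat.mod_lt, Nat.pos_of_ne_zero hm, Nat.pos_of_ne_zero hn])
    (fun ab _ => by simpa using crt_lt ab.1 ab.2) crt_mod_mod ?_
    (fun j hj => by rw [crt_mod_mod j hj])
  rintro ⟨a, b⟩ hab
  obtain ⟨ha, hb⟩ := by simpa using hab
  obtain ⟨hca, hcb⟩ := (Nat.chineseRemainder co a b).prop
  exact Prod.ext (Eq.trans hca (Nat.mod_eq_of_lt ha)) (Eq.trans hcb (Nat.mod_eq_of_lt hb))

theorem Finset.sum_range_mul_mul_pow_eq_sum_chineseRemainder {R : Type*} [CommSemiring R]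
    {m n : ℕ} (co : m.Coprime n) (f : ℕ → R) {x y : R} (hx : x ^ m = 1) (hy : y ^ n = 1) :
    ∑ j ∈ range (m * n), f j * (x * y) ^ j =
      ∑ a ∈ range m, ∑ b ∈ range n, f (Nat.chineseRemainder co a b) * x ^ a * y ^ b := by
  rw [sum_range_mul_eq_sum_chineseRemainder co]
  refine sum_congr rfl fun a _ => sum_congr rfl fun b _ => ?_
  obtain ⟨hca, hcb⟩ := (Nat.chineseRemainder co a b).prop
  rw [mul_pow, pow_eq_pow_of_modEq hca hx, pow_eq_pow_of_modEq hcb hy, mul_assoc]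

theorem Polynomial.coeff_eq_coeff_zero_of_cyclotomic_dvd {K : Type*} [Field K] {p : ℕ}
    (hp : p.Prime) {P : K[X]} (hdeg : P.degree < p) (h : cyclotomic p K ∣ P) :
    ∀ i < p, P.coeff i = P.coeff 0 := by
  obtain ⟨Q, rfl⟩ := h
  have hQ : Q.natDegree = 0 := by
    rcases eq_or_ne Q 0 with rfl | hQ0
    · simp
    rw [← natDegree_lt_iff_degree_lt (mul_ne_zero (cyclotomic_ne_zero p K) hQ0),
      natDegree_mul (cyclotomic_ne_zero p K) hQ0, natDegree_cyclotomic,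
      Nat.totient_prime hp] at hdeg
    omega
  obtain ⟨c, rfl⟩ := natDegree_eq_zero.mp hQ
  have : Fact p.Prime := ⟨hp⟩
  intro i hi
  simp [cyclotomic_prime, coeff_X_pow, hi, hp.pos]

namespace IsPrimitiveRoot

theorem mul_of_coprime {M : Type*} [CommMonoid M] {x y : M} {m n : ℕ}
    (hx : IsPrimitiveRoot x m) (hy : IsPrimitiveRoot y n) (h : m.Coprime n) :
    IsPrimitiveRoot (x * y) (m * n) := by
  rw [IsPrimitiveRoot.iff_orderOf, (Commute.all x y).orderOf_mul_eq_mul_orderOf_of_coprime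
    (by rwa [← hx.eq_orderOf, ← hy.eq_orderOf]), ← hx.eq_orderOf, ← hy.eq_orderOf]

theorem sum_ratCast_mul_pow_eq_zero {K : Type*} [Field K] [CharZero K] {n : ℕ} (hn : 0 < n)
    {ζ ν : K} (hζ : IsPrimitiveRoot ζ n) (hν : IsPrimitiveRoot ν n) (q : ℕ → ℚ) (s : Finset ℕ)
    (h : ∑ j ∈ s, (q j : K) * ζ ^ j = 0) : ∑ j ∈ s, (q j : K) * ν ^ j = 0 := by
  have aeval_eq (x : K) :
      aeval x (∑ j ∈ s, C (q j) * X ^ j) = ∑ j ∈ s, (q j : K) * x ^ j := by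
    simp
  obtain ⟨Q, hQ⟩ := minpoly.dvd ℚ ζ ((aeval_eq ζ).trans h)
  rw [← cyclotomic_eq_minpoly_rat hζ hn, cyclotomic_eq_minpoly_rat hν hn] at hQ
  rw [← aeval_eq, hQ, map_mul, minpoly.aeval, zero_mul]

theorem cyclotomic_dvd_of_forall_isRoot {K : Type*} [Field K] {n : ℕ} (hn : 0 < n) {η : K}
    (hη : IsPrimitiveRoot η n) {P : K[X]} (h : ∀ ν, IsPrimitiveRoot ν n → P.IsRoot ν) :
    cyclotomic n K ∣ P := by
  rw [cyclotomic_eq_prod_X_sub_primitiveRoots hη]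
  refine prod_dvd_of_coprime
    ((pairwise_coprime_X_sub_C Function.injective_id).set_pairwise _) fun ν hν => ?_
  exact dvd_iff_isRoot.mpr (h ν ((mem_primitiveRoots hn).mp hν))

theorem forall_eq_of_forall_sum_eq_zero {K : Type*} [Field K] {p : ℕ} (hp : p.Prime) {η : K}
    (hη : IsPrimitiveRoot η p) (a : Fin p → K)
    (h : ∀ ν, IsPrimitiveRoot ν p → ∑ i, a i * ν ^ (i : ℕ) = 0) : ∀ i j, a i = a j := by
  set P : K[X] := ∑ i : Fin p, C (a i) * X ^ (i : ℕ)
  have coeff_P (i : Fin p) : P.coeff i = a i := by simp [P, ← Fin.ext_iff]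
  have hdvd : cyclotomic p K ∣ P :=
    hη.cyclotomic_dvd_of_forall_isRoot hp.pos fun ν hν => by
      simpa [P, eval_finsetSum] using h ν hν
  have hcoeff := coeff_eq_coeff_zero_of_cyclotomic_dvd hp (degree_sum_fin_lt a) hdvd
  intro i j
  rw [← coeff_P i, ← coeff_P j]
  exact (hcoeff i i.isLt).trans (hcoeff j j.isLt).symm

theorem sum_sum_mul_pow_eq_zero_of_forall_eq {R : Type*} [CommRing R] [IsDomain R] {k n : ℕ}
    {x : R} (hx : IsPrimitiveRoot x k) (hk : 1 < k) {f : ℕ → ℕ → R}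
    (hf : ∀ a < k, ∀ b < n, f a b = f 0 b) :
    ∑ a ∈ range k, ∑ b ∈ range n, f a b * x ^ a = 0 := by
  rw [sum_comm]
  refine sum_eq_zero fun b hb => ?_
  rw [sum_congr rfl fun a ha => by rw [hf a (mem_range.mp ha) b (mem_range.mp hb)], ← mul_sum,
    hx.geom_sum_eq_zero hk, mul_zero]

end IsPrimitiveRoot

theorem zero_one_matrix_const_cols_or_const_rows {p r : ℕ} {m : ℕ → ℕ → ℤ}
    (h01 : ∀ a b, m a b = 0 ∨ m a b = 1)
    (hdiff : ∀ a < p, ∀ b < r, m a b - m a 0 = m 0 b - m 0 0) :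
    (∀ a < p, ∀ b < r, m a b = m 0 b) ∨ (∀ a < p, ∀ b < r, m a b = m a 0) := by
  refine or_iff_not_imp_right.mpr fun hrows => ?_
  push Not at hrows
  obtain ⟨a₁, ha₁, b₁, hb₁, hne⟩ := hrows
  -- column `b₁` minus column `0` is a nonzero constant `±1`, which pins down column `0`
  have hcol₀ (a : ℕ) (ha : a < p) : m a 0 = m 0 0 := by
    have := hdiff a₁ ha₁ b₁ hb₁
    have := hdiff a ha b₁ hb₁
    have := h01 a b₁; have := h01 a 0; have := h01 0 b₁; have := h01 0 0
    omega
  intro a ha b hb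
  linarith [hdiff a ha b hb, hcol₀ a ha]

theorem zero_one_matrix_sum_pow_eq_zero_or {K : Type*} [Field K] [CharZero K] {p r : ℕ}
    (hp : p.Prime) (hr : r.Prime) {ω η : K} (hω : IsPrimitiveRoot ω p) (hη : IsPrimitiveRoot η r)
    {m : ℕ → ℕ → ℤ} (h01 : ∀ a b, m a b = 0 ∨ m a b = 1)
    (h : ∀ ν, IsPrimitiveRoot ν r →
      ∑ a ∈ range p, ∑ b ∈ range r, (m a b : K) * ω ^ a * ν ^ b = 0) :
    ∑ a ∈ range p, ∑ b ∈ range r, (m a b : K) * ω ^ a = 0 ∨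
      ∑ a ∈ range p, ∑ b ∈ range r, (m a b : K) * η ^ b = 0 := by
  have hcol_sums (b : ℕ) (hb : b < r) :
      ∑ a ∈ range p, (m a b : K) * ω ^ a = ∑ a ∈ range p, (m a 0 : K) * ω ^ a := by
    refine hη.forall_eq_of_forall_sum_eq_zero hr
      (fun b : Fin r => ∑ a ∈ range p, (m a b : K) * ω ^ a) (fun ν hν => ?_) ⟨b, hb⟩ ⟨0, hr.pos⟩
    rw [Fin.sum_univ_eq_sum_range (fun b => (∑ a ∈ range p, (m a b : K) * ω ^ a) * ν ^ b)]
    simpa [sum_mul, sum_comm (s := range p)] using h ν hν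
  have hdiff (a : ℕ) (ha : a < p) (b : ℕ) (hb : b < r) : m a b - m a 0 = m 0 b - m 0 0 := by
    refine (hω.sum_eq_zero_iff_forall_eq_int hp (fun i : Fin p => m i b - m i 0)).mp ?_
      ⟨a, ha⟩ ⟨0, hp.pos⟩
    rw [Fin.sum_univ_eq_sum_range (fun i => ((m i b - m i 0 : ℤ) : K) * ω ^ i)]
    simp [sub_mul, sum_sub_distrib, hcol_sums b hb]
  rcases zero_one_matrix_const_cols_or_const_rows h01 hdiff with hcols | hrows
  · exact .inl (hω.sum_sum_mul_pow_eq_zero_of_forall_eq hp.one_lt fun a ha b hb => by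
      rw [hcols a ha b hb])
  · refine .inr ((sum_comm).trans ?_)
    exact hη.sum_sum_mul_pow_eq_zero_of_forall_eq hr.one_lt fun b hb a ha => by
      rw [hrows a ha b hb]

/-- From the proof of Lemma 3.2 (3): for distinct primes p and r and coefficients
c_j ∈ {0,1}, if the 0/1 polynomial ∑_j c_j x^j of degree < pr vanishes at the
primitive pr-th root of unity ζ = exp(2πi/(pr)), then it vanishes at ζ^r (a
primitive p-th root of unity) or at ζ^p (a primitive r-th root of unity). -/
theorem zero_one_poly_root_of_unity (p r : ℕ) (hp : p.Prime) (hr : r.Prime)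
    (hpr : p ≠ r) (c : ℕ → ℂ) (hc : ∀ j, c j = 0 ∨ c j = 1)
    (h : ∑ j ∈ Finset.range (p * r),
        c j * Complex.exp (2 * Real.pi * Complex.I / (p * r)) ^ j = 0) :
    (∑ j ∈ Finset.range (p * r),
        c j * Complex.exp (2 * Real.pi * Complex.I / (p * r)) ^ (r * j) = 0) ∨
    (∑ j ∈ Finset.range (p * r),
        c j * Complex.exp (2 * Real.pi * Complex.I / (p * r)) ^ (p * j) = 0) := by
  set ζ := Complex.exp (2 * Real.pi * Complex.I / (p * r))
  have hcop : p.Coprime r := (Nat.coprime_primes hp hr).mpr hpr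
  have hpr₀ : 0 < p * r := Nat.mul_pos hp.pos hr.pos
  have hζ : IsPrimitiveRoot ζ (p * r) := by
    simpa using Complex.isPrimitiveRoot_exp (p * r) hpr₀.ne'
  have hω : IsPrimitiveRoot (ζ ^ r) p := hζ.pow hpr₀ (mul_comm p r)
  have hη : IsPrimitiveRoot (ζ ^ p) r := hζ.pow hpr₀ rfl
  obtain ⟨q, hq01, rfl⟩ : ∃ q : ℕ → ℤ, (∀ j, q j = 0 ∨ q j = 1) ∧ c = fun j => (q j : ℂ) :=
    ⟨fun j => if c j = 0 then 0 else 1, fun j => by by_cases hcj : c j = 0 <;> simp [hcj],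
      funext fun j => by rcases hc j with h0 | h1 <;> simp [*]⟩
  have reindex {x y : ℂ} (hx : x ^ p = 1) (hy : y ^ r = 1) :=
    sum_range_mul_mul_pow_eq_sum_chineseRemainder hcop (fun j => (q j : ℂ)) hx hy
  have hconj (ν : ℂ) (hν : IsPrimitiveRoot ν r) :
      ∑ a ∈ range p, ∑ b ∈ range r,
        (q (Nat.chineseRemainder hcop a b) : ℂ) * (ζ ^ r) ^ a * ν ^ b = 0 := by
    rw [← reindex hω.pow_eq_one hν.pow_eq_one]
    simpa using hζ.sum_ratCast_mul_pow_eq_zero hpr₀ (hω.mul_of_coprime hν hcop) (fun j => q j) _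
      (by simpa using h)
  rcases zero_one_matrix_sum_pow_eq_zero_or hp hr hω hη (fun a b => hq01 _) hconj with h₁ | h₂
  · left
    simpa [pow_mul, h₁] using reindex hω.pow_eq_one (one_pow r)
  · right
    simpa [pow_mul, h₂] using reindex (one_pow p) hη.pow_eq_one
end
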